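/- arXiv:2307.09453 — 3 statements merged into one kernel-verified Lean document; each statement's English description precedes it below -/
import Mathlib

section
/- Let N ≥ 3 be odd and let (S,E) be the cycle of length N. Let B in phi with B ≠ ∅. Then |B| = (N−1)/2 if and only if every connected component of the induced subgraph of (S,E) on S∖supp(B) has cardinality 1, with the exception of exactly one component, which has cardinality 2. -/
/-- The induced subgraph of `adj` on `I` is a path (type `A_m`, `m ≥ 1`):
there is an injective enumeration `f : Fin (m+1) → S` of `I` such that two
elements of `I` are adjacent iff they are consecutive in the enumeration. -/
def IsPathOn {S : Type} [DecidableEq S] (adj : S → S → Prop) (I : Finset S) : Prop :=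
  ∃ (m : ℕ) (f : Fin (m + 1) → S), Function.Injective f ∧
    I = Finset.image f Finset.univ ∧
    ∀ i j : Fin (m + 1), adj (f i) (f j) ↔ ((i : ℕ) + 1 = (j : ℕ) ∨ (j : ℕ) + 1 = (i : ℕ))

/-- The induced subgraph of `adj` on `I` is connected. -/
def ConnOn {S : Type} (adj : S → S → Prop) (I : Finset S) : Prop :=
  ∀ s ∈ I, ∀ t ∈ I, Relation.ReflTransGen (fun a b => a ∈ I ∧ b ∈ I ∧ adj a b) s t

/-- `I ∈ Cal_I^1`: the induced subgraph on `I` is a path and `|I|` is odd. -/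
def CalI1 {S : Type} [DecidableEq S] (adj : S → S → Prop) (I : Finset S) : Prop :=
  IsPathOn adj I ∧ Odd I.card

/-- `I ≺ I'`. -/
def Prec {S : Type} [DecidableEq S] (adj : S → S → Prop) (I I' : Finset S) : Prop :=
  I ⊂ I' ∧ ¬ ConnOn adj (I' \ I)

/-- `I ♠ I'`. -/
def Spade {S : Type} [DecidableEq S] (adj : S → S → Prop) (I I' : Finset S) : Prop :=
  I ∩ I' = ∅ ∧ ¬ ConnOn adj (I ∪ I')

/-- `I^{ev}`: the set of `s ∈ I` such that `I ∖ {s}` is the disjoint union of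
`I', I'' ∈ Cal_I^1` with `I' ♠ I''`. -/
def Iev {S : Type} [DecidableEq S] (adj : S → S → Prop) (I : Finset S) : Set S :=
  {s | s ∈ I ∧ ∃ I' I'' : Finset S, CalI1 adj I' ∧ CalI1 adj I'' ∧
    Spade adj I' I'' ∧ I.erase s = I' ∪ I''}

/-- Property (P0). -/
def P0 {S : Type} [DecidableEq S] (adj : S → S → Prop) (B : Finset (Finset S)) : Prop :=
  ∀ I ∈ B, ∀ I' ∈ B, I = I' ∨ Spade adj I I' ∨ Prec adj I I' ∨ Prec adj I' I

/-- Property (P1). -/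
def P1 {S : Type} [DecidableEq S] (adj : S → S → Prop) (B : Finset (Finset S)) : Prop :=
  ∀ I ∈ B, ∃ (k : ℕ) (f : Fin k → Finset S),
    (∀ j, f j ∈ B ∧ Prec adj (f j) I) ∧
    (∀ j j', j ≠ j' → Disjoint (f j) (f j')) ∧
    Iev adj I ⊆ ⋃ j, ((f j : Finset S) : Set S)

/-- `phi`: finite sets `B` of elements of `Cal_I^1` satisfying (P0) and (P1). -/
def phiSet {S : Type} [DecidableEq S] (adj : S → S → Prop) : Set (Finset (Finset S)) :=
  {B | (∀ I ∈ B, CalI1 adj I) ∧ P0 adj B ∧ P1 adj B}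

/-- `supp(B)`. -/
def suppB {S : Type} [DecidableEq S] (B : Finset (Finset S)) : Finset S := B.biUnion id

/-- `g_s(B)`. -/
def gs {S : Type} [DecidableEq S] (B : Finset (Finset S)) (s : S) : ℕ :=
  (B.filter (fun I => s ∈ I)).card

/-- `e_I = ∑_{s ∈ I} e_s`. -/
def eSum {S : Type} {V : Type} [AddCommGroup V] [Module (ZMod 2) V]
    (e : S → V) (I : Finset S) : V := ∑ s ∈ I, e s

/-- `L_B`: the `F`-span of `{e_I : I ∈ B}`. -/
def LB {S : Type} {V : Type} [AddCommGroup V] [Module (ZMod 2) V]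
    (e : S → V) (B : Finset (Finset S)) : Submodule (ZMod 2) V :=
  Submodule.span (ZMod 2) ((fun I => eSum e I) '' (B : Set (Finset S)))

/-- `eps(B) = ∑_{s ∈ S} ((g_s(B)(g_s(B)+1)/2) mod 2) e_s`. -/
def epsB {S : Type} [DecidableEq S] [Fintype S] {V : Type} [AddCommGroup V]
    [Module (ZMod 2) V] (e : S → V) (B : Finset (Finset S)) : V :=
  ∑ s : S, ((gs B s * (gs B s + 1) / 2 : ℕ) : ZMod 2) • e s

/-- The triple `(V, <,>, e)` (with graph `adj`) is perfect. -/
def IsPerfect {S : Type} [DecidableEq S] [Fintype S] {V : Type} [AddCommGroup V]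
    [Module (ZMod 2) V] (adj : S → S → Prop) (e : S → V) : Prop :=
  (∀ B ∈ phiSet adj,
      (LinearIndependent (ZMod 2) (fun I : {I : Finset S // I ∈ B} => eSum e I.1)) ∧
      (∀ I : Finset S, CalI1 adj I → (eSum e I ∈ LB e B ↔ I ∈ B))) ∧
  (∀ B ∈ phiSet adj, epsB e B ∈ LB e B) ∧
  Set.BijOn (epsB e) (phiSet adj) (⋃ B ∈ phiSet adj, ((LB e B : Submodule (ZMod 2) V) : Set V)) ∧
  (∀ B ∈ phiSet adj, ∀ B' ∈ phiSet adj, epsB e B' ∈ LB e B → ∀ s : S, gs B' s ≤ gs B s)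
/-- Adjacency of the cycle of length `N` on `S = ZMod N`. -/
def cadj (N : ℕ) (i j : ZMod N) : Prop := j = i + 1 ∨ i = j + 1

/-- `V = F^S` for `S = ZMod N`. -/
abbrev Vc (N : ℕ) := ZMod N → ZMod 2

/-- The standard basis vector `e_s`. -/
def eVec (N : ℕ) (s : ZMod N) : Vc N := Pi.single s 1

/-- The line `F·e_S`, where `e_S = ∑_{s ∈ S} e_s`. -/
def radN (N : ℕ) [NeZero N] : Submodule (ZMod 2) (Vc N) :=
  Submodule.span (ZMod 2) {eSum (eVec N) Finset.univ}

/-- `Vbar = V / (F·e_S)`. -/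
abbrev VbarN (N : ℕ) [NeZero N] := Vc N ⧸ radN N

/-- The quotient map `pi : V → Vbar`. -/
def piQ (N : ℕ) [NeZero N] : Vc N →ₗ[ZMod 2] VbarN N := (radN N).mkQ

/-- `ebar_s = pi(e_s)`. -/
def ebar (N : ℕ) [NeZero N] (s : ZMod N) : VbarN N := piQ N (eVec N s)
open scoped Classical in
/-- The connected component of `s` in the induced subgraph of `adj` on `I`. -/
noncomputable def compOf {S : Type} [DecidableEq S] (adj : S → S → Prop)
    (I : Finset S) (s : S) : Finset S :=
  I.filter (fun t => Relation.ReflTransGen (fun a b => a ∈ I ∧ b ∈ I ∧ adj a b) s t)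

/-- `c(I)`: the set of vertex sets of connected components of the induced subgraph on `I`. -/
noncomputable def comps {S : Type} [DecidableEq S] (adj : S → S → Prop)
    (I : Finset S) : Finset (Finset S) :=
  I.image (compOf adj I)

/-- `|c^0(I)|`: the number of connected components of even cardinality. -/
noncomputable def c0card {S : Type} [DecidableEq S] (adj : S → S → Prop)
    (I : Finset S) : ℕ :=
  ((comps adj I).filter (fun C => Even C.card)).card

/-- `V_0 = {e_I : I ⊊ S with |c^0(I)| even}`. -/
def V0set (N : ℕ) [NeZero N] : Set (Vc N) :=
  {v | ∃ I : Finset (ZMod N), I ≠ Finset.univ ∧ Even (c0card (cadj N) I) ∧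
    v = eSum (eVec N) I}

/-- `V_1 = {e_S} ∪ {e_I : ∅ ≠ I ⊊ S with |c^0(I)| odd}`. -/
def V1set (N : ℕ) [NeZero N] : Set (Vc N) :=
  {v | v = eSum (eVec N) Finset.univ ∨ ∃ I : Finset (ZMod N), I ≠ ∅ ∧ I ≠ Finset.univ ∧
    Odd (c0card (cadj N) I) ∧ v = eSum (eVec N) I}
open scoped Classical in
/-- `I^{odd} = I ∖ I^{ev}` (as a `Finset`). -/
noncomputable def IoddF {S : Type} [DecidableEq S] (adj : S → S → Prop)
    (I : Finset S) : Finset S :=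
  I.filter (fun s => s ∉ Iev adj I)

/-- `n_B = |{I ∈ B : ee ⊆ I}|`. -/
def nB {S : Type} [DecidableEq S] (ee : Finset S) (B : Finset (Finset S)) : ℕ :=
  (B.filter (fun I => ee ⊆ I)).card

open scoped Classical in
/-- `B ↦ B^!`: remove the unique `I_B ∈ B` with `|I_B ∩ ee| = 1` when `n_B` is odd;
leave `B` unchanged when `n_B` is even. -/
noncomputable def bangF {S : Type} [DecidableEq S] (ee : Finset S)
    (B : Finset (Finset S)) : Finset (Finset S) :=
  if h : Odd (nB ee B) ∧ ∃ I ∈ B, (I ∩ ee).card = 1 then B.erase h.2.choose else B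

/-- `omega = {B^! : B ∈ phi}`. -/
def omegaSet {S : Type} [DecidableEq S] (adj : S → S → Prop) (ee : Finset S) :
    Set (Finset (Finset S)) :=
  (bangF ee) '' (phiSet adj)

open scoped Classical in
/-- `Btilde`: the unique element of `phi` with `Btilde^! = B`. -/
noncomputable def tildeF {S : Type} [DecidableEq S] (adj : S → S → Prop) (ee : Finset S)
    (C : Finset (Finset S)) : Finset (Finset S) :=
  if h : ∃ B ∈ phiSet adj, bangF ee B = C then h.choose else ∅

/-- `'eps(B) = eps(Btilde)`. -/
noncomputable def epsO {S : Type} [DecidableEq S] [Fintype S] {V : Type} [AddCommGroup V]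
    [Module (ZMod 2) V] (adj : S → S → Prop) (ee : Finset S) (e : S → V)
    (C : Finset (Finset S)) : V :=
  epsB e (tildeF adj ee C)

/-- `B' ⪯ B` on `omega`. -/
def preceqO {S : Type} [DecidableEq S] [Fintype S] {V : Type} [AddCommGroup V]
    [Module (ZMod 2) V] (adj : S → S → Prop) (ee : Finset S) (e : S → V)
    (B' B : Finset (Finset S)) : Prop :=
  ∃ (k : ℕ) (c : ℕ → Finset (Finset S)), c 0 = B' ∧ c k = B ∧
    (∀ i ≤ k, c i ∈ omegaSet adj ee) ∧
    (∀ i < k, epsO adj ee e (c i) ∈ LB e (c (i + 1)))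

/-- The linear form `v ↦ v t + v t'` on `V`. -/
def zeeV (N : ℕ) (t t' : ZMod N) : Vc N →ₗ[ZMod 2] ZMod 2 :=
  (LinearMap.proj t : Vc N →ₗ[ZMod 2] ZMod 2) + (LinearMap.proj t' : Vc N →ₗ[ZMod 2] ZMod 2)

/-- `z_ee : Vbar → F`, the linear map with `z_ee(ebar_s) = 1` iff `s ∈ ee = {t,t'}`. -/
noncomputable def zee (N : ℕ) [NeZero N] (t t' : ZMod N) : VbarN N →ₗ[ZMod 2] ZMod 2 :=
  Submodule.liftQ (radN N) (zeeV N t t') (by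
    rw [radN, Submodule.span_le, Set.singleton_subset_iff]
    have h1 : ∀ u : ZMod N, (eSum (eVec N) Finset.univ) u = 1 := by
      intro u
      simp [eSum, eVec, Finset.sum_apply, Finset.sum_pi_single]
    simp only [SetLike.mem_coe, LinearMap.mem_ker, zeeV, LinearMap.add_apply,
      LinearMap.proj_apply, h1]
    decide)
/-- The maximal elements of a finite family of finsets, under inclusion. -/
def maxElts {S : Type} [DecidableEq S] (C : Finset (Finset S)) : Finset (Finset S) :=
  C.filter (fun I => ∀ I' ∈ C, ¬ I ⊂ I')

/-- `restB B k = B ∖ (B_1 ∪ … ∪ B_k)`: what remains of `B` after removing the first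
`k` layers; the `k`-th layer (`k ≥ 1`) is `B_k = maxElts (restB B (k-1))`. -/
def restB {S : Type} [DecidableEq S] (B : Finset (Finset S)) : ℕ → Finset (Finset S)
  | 0 => B
  | k + 1 => restB B k \ maxElts (restB B k)

/-- The relation `B' ≤ B` on `phi(V)`. -/
def lePhi {S : Type} [DecidableEq S] [Fintype S] {V : Type} [AddCommGroup V]
    [Module (ZMod 2) V] (adj : S → S → Prop) (e : S → V)
    (B' B : Finset (Finset S)) : Prop :=
  ∃ (k : ℕ) (c : ℕ → Finset (Finset S)), c 0 = B' ∧ c k = B ∧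
    (∀ i ≤ k, c i ∈ phiSet adj) ∧
    (∀ i < k, epsB e (c i) ∈ LB e (c (i + 1)))

/-
Every member of `B` is a path in the cycle, hence an arc, of odd length at most `N - 2`, and by
(P0) the family `B` is laminar. Let `J₁, …, J_r` be the maximal members of `B` strictly inside
`I ∈ B`. Since `J_i ≺ I` and `J_i ♠ J_j`, the `J_i` avoid both ends of `I` and are separated by
gaps, so `∑ (|J_i| + 1) ≤ |I| - 1`. Every odd position of `I` lies in `I^{ev}`, so by (P1) the
`J_i` cover the `(|I| - 1) / 2` odd positions, which gives the reverse inequality. By induction,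
`I` contains `(|I| + 1) / 2` members of `B`, and summing over the `k` maximal members gives
`2 |B| = |supp B| + k`. The maximal members are pairwise non-adjacent arcs, so `S ∖ supp B` has
exactly `k` components, of total size `N - |supp B|`. Hence `|B| = (N - 1) / 2` iff these `k`
components have total size `k + 1`, i.e. all have size 1 except one of size 2.
-/

open Finset

section Graph

variable {S : Type} {adj : S → S → Prop}

def inducedAdj (adj : S → S → Prop) (I : Finset S) (a b : S) : Prop := a ∈ I ∧ b ∈ I ∧ adj a b

instance [Std.Symm adj] (I : Finset S) : Std.Symm (inducedAdj adj I) :=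
  ⟨fun _ _ h => ⟨h.2.1, h.1, symm h.2.2⟩⟩

lemma reflTransGen_inducedAdj_mono {I J : Finset S} (h : I ⊆ J) {s t : S}
    (hst : Relation.ReflTransGen (inducedAdj adj I) s t) :
    Relation.ReflTransGen (inducedAdj adj J) s t :=
  Relation.ReflTransGen.mono (fun _ _ hab => ⟨h hab.1, h hab.2.1, hab.2.2⟩) _ _ hst

lemma connOn_of_forall_reflTransGen [Std.Symm adj] {I : Finset S} {x : S}
    (h : ∀ u ∈ I, Relation.ReflTransGen (inducedAdj adj I) x u) : ConnOn adj I :=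
  fun s hs t ht => (symm (h s hs)).trans (h t ht)

variable [DecidableEq S]

lemma connOn_union_of_adj [Std.Symm adj] {A B : Finset S} (hA : ConnOn adj A)
    (hB : ConnOn adj B) {x y : S} (hx : x ∈ A) (hy : y ∈ B) (hxy : adj x y) :
    ConnOn adj (A ∪ B) := by
  refine connOn_of_forall_reflTransGen (x := x) fun u hu => ?_
  rcases mem_union.1 hu with hu | hu
  · exact reflTransGen_inducedAdj_mono subset_union_left (hA x hx u hu)
  · exact .head ⟨mem_union_left _ hx, mem_union_right _ hy, hxy⟩
      (reflTransGen_inducedAdj_mono subset_union_right (hB y hy u hu))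

lemma Spade.symm {A B : Finset S} (h : Spade adj A B) : Spade adj B A := by
  rw [Spade, inter_comm, union_comm]
  exact h

lemma Spade.not_adj [Std.Symm adj] {A B : Finset S} (h : Spade adj A B)
    (hA : ConnOn adj A) (hB : ConnOn adj B) {x y : S} (hx : x ∈ A) (hy : y ∈ B) :
    ¬ adj x y :=
  fun hxy => h.2 (connOn_union_of_adj hA hB hx hy hxy)

lemma not_connOn_union {A B : Finset S} (hA : A.Nonempty) (hB : B.Nonempty)
    (hAB : Disjoint A B) (h : ∀ x ∈ A, ∀ y ∈ B, ¬ adj x y) : ¬ ConnOn adj (A ∪ B) := by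
  obtain ⟨a, ha⟩ := hA
  obtain ⟨b, hb⟩ := hB
  intro hconn
  have hstay : ∀ u, Relation.ReflTransGen (inducedAdj adj (A ∪ B)) a u → u ∈ A := by
    intro u hu
    induction hu with
    | refl => exact ha
    | tail _ step ih =>
      exact (mem_union.1 step.2.1).resolve_right fun hB' => h _ ih _ hB' step.2.2
  exact disjoint_left.1 hAB (hstay b (hconn a (mem_union_left _ ha) b (mem_union_right _ hb))) hb

lemma IsPathOn.connOn [Std.Symm adj] {I : Finset S} (h : IsPathOn adj I) :
    ConnOn adj I := by
  obtain ⟨m, f, -, rfl, hadj⟩ := h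
  have hmem : ∀ i, f i ∈ image f univ := fun i => mem_image_of_mem f (mem_univ i)
  have hreach : ∀ k (hk : k < m + 1),
      Relation.ReflTransGen (inducedAdj adj (image f univ)) (f 0) (f ⟨k, hk⟩) := by
    intro k
    induction k with
    | zero => exact fun _ => .refl
    | succ k ih =>
      exact fun hk => (ih (by omega)).tail
        ⟨hmem _, hmem _, (hadj ⟨k, by omega⟩ ⟨k + 1, hk⟩).2 (.inl rfl)⟩
  refine connOn_of_forall_reflTransGen (x := f 0) fun u hu => ?_
  obtain ⟨i, -, rfl⟩ := mem_image.1 hu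
  exact hreach i i.2

lemma mem_compOf {D : Finset S} {s t : S} :
    t ∈ compOf adj D s ↔ t ∈ D ∧ Relation.ReflTransGen (inducedAdj adj D) s t := by
  classical
  exact mem_filter

lemma compOf_eq_compOf_of_mem [Std.Symm adj] {D : Finset S} {s t : S}
    (ht : t ∈ compOf adj D s) : compOf adj D t = compOf adj D s := by
  have hst := (mem_compOf.1 ht).2
  ext u
  simp only [mem_compOf]
  exact and_congr_right fun _ => ⟨hst.trans, (symm hst).trans⟩

lemma compOf_eq_self {I : Finset S} (hI : ConnOn adj I) {x : S} (hx : x ∈ I) :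
    compOf adj I x = I := by
  ext t
  rw [mem_compOf]
  exact ⟨And.left, fun ht => ⟨ht, hI x hx t ht⟩⟩

lemma nonempty_of_mem_comps {D C : Finset S} (hC : C ∈ comps adj D) : C.Nonempty := by
  obtain ⟨s, hs, rfl⟩ := mem_image.1 hC
  exact ⟨s, mem_compOf.2 ⟨hs, .refl⟩⟩

lemma sum_card_comps [Std.Symm adj] (D : Finset S) : ∑ C ∈ comps adj D, #C = #D := by
  rw [card_eq_sum_card_image (compOf adj D) D]
  refine sum_congr rfl fun C hC => congrArg card ?_
  obtain ⟨s, -, rfl⟩ := mem_image.1 hC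
  ext x
  rw [mem_filter]
  exact ⟨fun hx => ⟨(mem_compOf.1 hx).1, compOf_eq_compOf_of_mem hx⟩,
    fun ⟨hx, hxs⟩ => hxs ▸ mem_compOf.2 ⟨hx, .refl⟩⟩

end Graph

section Laminar

variable {S : Type}

def IsLaminar (F : Finset (Finset S)) : Prop :=
  ∀ I ∈ F, ∀ K ∈ F, I ⊆ K ∨ K ⊆ I ∨ Disjoint I K

lemma IsLaminar.subset {F G : Finset (Finset S)} (hF : IsLaminar F) (hG : G ⊆ F) : IsLaminar G :=
  fun I hI K hK => hF I (hG hI) K (hG hK)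

variable [DecidableEq S]

def below (F : Finset (Finset S)) (I : Finset S) : Finset (Finset S) := {K ∈ F | K ⊆ I}

def children (F : Finset (Finset S)) (I : Finset S) : Finset (Finset S) := maxElts {J ∈ F | J ⊂ I}

variable {F : Finset (Finset S)}

lemma mem_maxElts {I : Finset S} : I ∈ maxElts F ↔ I ∈ F ∧ ∀ I' ∈ F, ¬ I ⊂ I' := mem_filter

lemma maxElts_subset : maxElts F ⊆ F := filter_subset _ _

lemma exists_mem_maxElts_superset {K : Finset S} (hK : K ∈ F) : ∃ M ∈ maxElts F, K ⊆ M := by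
  obtain ⟨M, hKM, hM⟩ := F.exists_le_maximal hK
  exact ⟨M, mem_maxElts.2 ⟨hM.1, fun I' hI' hMI' => hMI'.2 (hM.2 hI' hMI'.1)⟩, hKM⟩

lemma mem_suppB_iff {x : S} :
    x ∈ suppB F ↔ ∃ M ∈ maxElts F, x ∈ M := by
  simp only [suppB, mem_biUnion, id]
  refine ⟨fun ⟨K, hK, hx⟩ => ?_, fun ⟨M, hM, hx⟩ => ⟨M, maxElts_subset hM, hx⟩⟩
  obtain ⟨M, hM, hKM⟩ := exists_mem_maxElts_superset hK
  exact ⟨M, hM, hKM hx⟩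

lemma IsLaminar.disjoint_of_mem_maxElts (hF : IsLaminar F) {M M' : Finset S}
    (hM : M ∈ maxElts F) (hM' : M' ∈ maxElts F) (hne : M ≠ M') : Disjoint M M' := by
  rw [mem_maxElts] at hM hM'
  rcases hF M hM.1 M' hM'.1 with h | h | h
  · exact absurd (ssubset_of_subset_of_ne h hne) (hM.2 M' hM'.1)
  · exact absurd (ssubset_of_subset_of_ne h hne.symm) (hM'.2 M hM.1)
  · exact h

lemma IsLaminar.card_eq_sum_card_below (hF : IsLaminar F) (hne : ∀ I ∈ F, I.Nonempty) :
    #F = ∑ M ∈ maxElts F, #(below F M) := by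
  have hcover : F = (maxElts F).biUnion (below F) := by
    ext K
    simp only [mem_biUnion, below, mem_filter]
    exact ⟨fun hK => (exists_mem_maxElts_superset hK).imp fun M hM => ⟨hM.1, hK, hM.2⟩,
      fun ⟨_, _, hK, _⟩ => hK⟩
  conv_lhs => rw [hcover]
  refine card_biUnion fun M hM M' hM' hne' => disjoint_left.2 fun K hK hK' => ?_
  simp only [below, mem_filter] at hK hK'
  obtain ⟨x, hx⟩ := hne K hK.1
  exact disjoint_left.1 (hF.disjoint_of_mem_maxElts hM hM' hne') (hK.2 hx) (hK'.2 hx)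

lemma IsLaminar.card_suppB_eq_sum (hF : IsLaminar F) : #(suppB F) = ∑ M ∈ maxElts F, #M := by
  have hcover : suppB F = (maxElts F).biUnion id := by
    ext x
    rw [mem_suppB_iff, mem_biUnion]
    rfl
  rw [hcover]
  exact card_biUnion fun M hM M' hM' hne => hF.disjoint_of_mem_maxElts hM hM' hne

lemma IsLaminar.card_below_eq_one_add_sum (hF : IsLaminar F) (hne : ∀ I ∈ F, I.Nonempty)
    {I : Finset S} (hI : I ∈ F) : #(below F I) = 1 + ∑ J ∈ children F I, #(below F J) := by
  have hsplit : below F I = insert I {J ∈ F | J ⊂ I} := by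
    ext K
    simp only [below, mem_insert, mem_filter]
    constructor
    · rintro ⟨hK, hKI⟩
      exact (hKI.eq_or_ssubset).imp id fun h => ⟨hK, h⟩
    · rintro (rfl | ⟨hK, h⟩)
      exacts [⟨hI, subset_rfl⟩, ⟨hK, h.subset⟩]
  have hsub : {J ∈ F | J ⊂ I} ⊆ F := filter_subset _ _
  rw [hsplit, card_insert_of_notMem (by simp), add_comm,
    (hF.subset hsub).card_eq_sum_card_below fun J hJ => hne J (hsub hJ)]
  congr 1
  refine sum_congr rfl fun J hJ => congrArg card ?_
  have hJI : J ⊂ I := (mem_filter.1 (maxElts_subset hJ)).2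
  ext K
  simp only [below, mem_filter]
  exact ⟨fun h => ⟨h.1.1, h.2⟩, fun h => ⟨⟨h.1, h.2.trans_ssubset hJI⟩, h.2⟩⟩

end Laminar

section Phi

variable {S : Type} [DecidableEq S] {adj : S → S → Prop} {B : Finset (Finset S)}

lemma P0.isLaminar (h : P0 adj B) : IsLaminar B := fun I hI K hK => by
  rcases h I hI K hK with rfl | h | h | h
  · exact .inl subset_rfl
  · exact .inr (.inr (disjoint_iff_inter_eq_empty.2 h.1))
  · exact .inl h.1.subset
  · exact .inr (.inl h.1.subset)

lemma P0.spade_of_mem_maxElts (h : P0 adj B) {F : Finset (Finset S)} (hF : F ⊆ B)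
    {M M' : Finset S} (hM : M ∈ maxElts F) (hM' : M' ∈ maxElts F) (hne : M ≠ M') :
    Spade adj M M' := by
  rw [mem_maxElts] at hM hM'
  rcases h M (hF hM.1) M' (hF hM'.1) with h | h | h | h
  · exact absurd h hne
  · exact h
  · exact absurd h.1 (hM.2 M' hM'.1)
  · exact absurd h.1 (hM'.2 M hM.1)

lemma P0.prec_of_ssubset (h : P0 adj B) {I J : Finset S} (hJ : J ∈ B) (hI : I ∈ B) (hJI : J ⊂ I)
    (hne : J.Nonempty) : Prec adj J I := by
  rcases h J hJ I hI with rfl | h | h | h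
  · exact absurd hJI (ssubset_irrefl _)
  · obtain ⟨x, hx⟩ := hne
    exact absurd (h.1 ▸ mem_inter.2 ⟨hx, hJI.subset hx⟩) (notMem_empty x)
  · exact h
  · exact absurd (h.1.trans hJI) (ssubset_irrefl _)

lemma nonempty_of_mem_phiSet (hB : B ∈ phiSet adj) {I : Finset S} (hI : I ∈ B) : I.Nonempty :=
  card_pos.1 (hB.1 I hI).2.pos

lemma exists_mem_children_of_mem_iev (hB : P1 adj B) {I : Finset S} (hI : I ∈ B) {s : S}
    (hs : s ∈ Iev adj I) : ∃ J ∈ children B I, s ∈ J := by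
  obtain ⟨k, f, hf, -, hcov⟩ := hB I hI
  obtain ⟨i, hi⟩ := Set.mem_iUnion.1 (hcov hs)
  obtain ⟨J, hJ, hfJ⟩ := exists_mem_maxElts_superset
    (show f i ∈ {J ∈ B | J ⊂ I} from mem_filter.2 ⟨(hf i).1, (hf i).2.1⟩)
  exact ⟨J, hJ, hfJ hi⟩

end Phi

lemma sum_add_one_eq_of_cover_odd {ι : Type*} (T : Finset ι) (p m : ι → ℕ) {n : ℕ}
    (hn : Odd n) (hm : ∀ t ∈ T, Odd (m t)) (hin : ∀ t ∈ T, 1 ≤ p t ∧ p t + m t + 1 ≤ n)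
    (hsep : ∀ t ∈ T, ∀ u ∈ T, t ≠ u → p t + m t < p u ∨ p u + m u < p t)
    (hcov : ∀ j < n, Odd j → ∃ t ∈ T, p t ≤ j ∧ j < p t + m t) :
    ∑ t ∈ T, (m t + 1) = n - 1 := by
  have hpack : ∑ t ∈ T, (m t + 1) ≤ n - 1 := by
    have hdisj : (T : Set ι).PairwiseDisjoint fun t => Ico (p t) (p t + m t + 1) :=
      fun t ht u hu htu => disjoint_left.2 fun j hj hj' => by
        simp only [mem_Ico] at hj hj'
        have := hsep t ht u hu htu
        omega
    calc ∑ t ∈ T, (m t + 1) = #(T.biUnion fun t => Ico (p t) (p t + m t + 1)) := by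
          rw [card_biUnion hdisj]
          exact sum_congr rfl fun t _ => by simp; omega
      _ ≤ #(Ico 1 n) := card_le_card fun j hj => by
          obtain ⟨t, ht, hj⟩ := mem_biUnion.1 hj
          have := hin t ht
          simp only [mem_Ico] at hj ⊢
          omega
      _ = n - 1 := Nat.card_Ico 1 n
  -- the odd position `2 i + 1` lies in `[p, p + m)` exactly when `p / 2 ≤ i < (p + m) / 2`
  have hcover : n / 2 ≤ ∑ t ∈ T, (m t + 1) / 2 := by
    calc n / 2 = #(range (n / 2)) := (card_range _).symm
      _ ≤ #(T.biUnion fun t => Ico (p t / 2) ((p t + m t) / 2)) := card_le_card fun i hi => by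
          obtain ⟨t, ht, hpt⟩ := hcov (2 * i + 1) (by simp at hi; omega) (odd_two_mul_add_one i)
          exact mem_biUnion.2 ⟨t, ht, mem_Ico.2 (by omega)⟩
      _ ≤ ∑ t ∈ T, #(Ico (p t / 2) ((p t + m t) / 2)) := card_biUnion_le
      _ ≤ ∑ t ∈ T, (m t + 1) / 2 := sum_le_sum fun t _ => by simp; omega
  have hhalf : ∑ t ∈ T, (m t + 1) = 2 * ∑ t ∈ T, (m t + 1) / 2 := by
    rw [mul_sum]
    refine sum_congr rfl fun t ht => ?_
    obtain ⟨k, hk⟩ := hm t ht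
    omega
  obtain ⟨k, hk⟩ := hn
  omega

lemma exists_eq_two_iff_sum_eq_card_add_one {ι : Type*} [DecidableEq ι] (s : Finset ι)
    (f : ι → ℕ) (hf : ∀ i ∈ s, 1 ≤ f i) :
    (∃ i ∈ s, f i = 2 ∧ ∀ j ∈ s, j ≠ i → f j = 1) ↔ ∑ i ∈ s, f i = #s + 1 := by
  have hsum : ∑ i ∈ s, f i = ∑ i ∈ s, (f i - 1) + #s := by
    rw [card_eq_sum_ones, ← sum_add_distrib]
    exact sum_congr rfl fun i hi => by have := hf i hi; omega
  rw [hsum, add_comm, add_left_cancel_iff]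
  constructor
  · rintro ⟨i, hi, hfi, hj⟩
    have hzero : ∑ j ∈ s.erase i, (f j - 1) = 0 := sum_eq_zero fun j hj' => by
      rw [hj j (mem_erase.1 hj').2 (mem_erase.1 hj').1, Nat.sub_self]
    rw [← add_sum_erase s _ hi, hzero, hfi]
  · intro h1
    obtain ⟨i, hi, hgi⟩ : ∃ i ∈ s, f i - 1 ≠ 0 := by
      by_contra! h0
      rw [sum_eq_zero h0] at h1
      exact zero_ne_one h1
    have hle : f i - 1 ≤ ∑ i ∈ s, (f i - 1) :=
      single_le_sum (f := fun i => f i - 1) (fun j _ => Nat.zero_le _) hi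
    refine ⟨i, hi, by omega, fun j hj hji => ?_⟩
    have hpair : f j - 1 + (f i - 1) ≤ ∑ i ∈ s, (f i - 1) := by
      rw [← sum_pair (f := fun i => f i - 1) hji]
      exact sum_le_sum_of_subset (insert_subset hj (singleton_subset_iff.2 hi))
    have := hf j hj
    omega

section Cycle

variable {N : ℕ}

instance : Std.Symm (cadj N) := ⟨fun _ _ h => h.symm⟩

def arc (a : ZMod N) (n : ℕ) : Finset (ZMod N) := (range n).image fun k : ℕ => a + k

lemma mem_arc {a x : ZMod N} {n : ℕ} : x ∈ arc a n ↔ ∃ k < n, a + k = x := by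
  simp [arc]

lemma add_natCast_mem_arc (a : ZMod N) {k n : ℕ} (h : k < n) : a + k ∈ arc a n :=
  mem_arc.2 ⟨k, h, rfl⟩

lemma add_natCast_inj {a : ZMod N} {k l : ℕ} (hk : k < N) (hl : l < N) :
    a + k = a + l ↔ k = l := by
  rw [add_right_inj, ZMod.natCast_eq_natCast_iff', Nat.mod_eq_of_lt hk, Nat.mod_eq_of_lt hl]

lemma arc_union_arc (a : ZMod N) (p q : ℕ) : arc a p ∪ arc (a + p) q = arc a (p + q) := by
  ext x
  simp only [mem_union, mem_arc]
  constructor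
  · rintro (⟨k, hk, rfl⟩ | ⟨k, hk, rfl⟩)
    · exact ⟨k, by omega, rfl⟩
    · exact ⟨p + k, by omega, by push_cast; ring⟩
  · rintro ⟨k, hk, rfl⟩
    rcases lt_or_ge k p with hkp | hkp
    · exact .inl ⟨k, hkp, rfl⟩
    · exact .inr ⟨k - p, by omega, by rw [add_assoc, ← Nat.cast_add, Nat.add_sub_cancel' hkp]⟩

lemma connOn_arc (a : ZMod N) (n : ℕ) : ConnOn (cadj N) (arc a n) := by
  have hreach :
      ∀ k < n, Relation.ReflTransGen (inducedAdj (cadj N) (arc a n)) a (a + (k : ZMod N)) := by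
    intro k
    induction k with
    | zero => exact fun _ => by simpa using .refl
    | succ k ih =>
      refine fun hk => (ih (by omega)).tail ⟨add_natCast_mem_arc a (by omega),
        add_natCast_mem_arc a hk, ?_⟩
      exact .inl (by push_cast; ring)
  refine connOn_of_forall_reflTransGen (x := a) fun u hu => ?_
  obtain ⟨k, hk, rfl⟩ := mem_arc.1 hu
  exact hreach k hk

lemma card_arc (a : ZMod N) {n : ℕ} (hn : n ≤ N) : #(arc a n) = n := by
  rw [arc, card_image_of_injOn, card_range]
  intro k hk l hl h
  exact (add_natCast_inj (by simp at hk; omega) (by simp at hl; omega)).1 h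

lemma add_natCast_mem_arc_add_iff {a : ZMod N} {p m k : ℕ} (hk : k < N) (hpm : p + m ≤ N) :
    a + (k : ZMod N) ∈ arc (a + (p : ZMod N)) m ↔ p ≤ k ∧ k < p + m := by
  rw [mem_arc]
  constructor
  · rintro ⟨j, hj, hjk⟩
    rw [add_assoc, ← Nat.cast_add, add_natCast_inj (by omega) hk] at hjk
    omega
  · rintro ⟨hpk, hkpm⟩
    exact ⟨k - p, by omega, by rw [add_assoc, ← Nat.cast_add, Nat.add_sub_cancel' hpk]⟩

lemma add_natCast_mem_arc_iff {a : ZMod N} {n k : ℕ} (hk : k < N) (hn : n ≤ N) :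
    a + (k : ZMod N) ∈ arc a n ↔ k < n := by
  simpa using add_natCast_mem_arc_add_iff (a := a) (p := 0) hk (by simpa using hn)

lemma disjoint_arc_arc (a : ZMod N) {p q : ℕ} (h : p + q ≤ N) :
    Disjoint (arc a p) (arc (a + (p : ZMod N)) q) := by
  refine disjoint_left.2 fun x hx hx' => ?_
  obtain ⟨k, hk, rfl⟩ := mem_arc.1 hx
  have := (add_natCast_mem_arc_add_iff (show k < N by omega) h).1 hx'
  omega

lemma exists_eq_add_of_arc_subset_arc {a b : ZMod N} {m n : ℕ} (hm : 1 ≤ m) (hn : n < N)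
    (h : arc b m ⊆ arc a n) : ∃ p, p + m ≤ n ∧ b = a + p := by
  obtain ⟨p, hp, rfl⟩ := mem_arc.1 (h (by simpa using add_natCast_mem_arc b hm))
  refine ⟨p, ?_, rfl⟩
  by_contra! hpm
  have hlast : a + (n : ZMod N) ∈ arc (a + (p : ZMod N)) m := by
    simpa [add_assoc, ← Nat.cast_add, Nat.add_sub_cancel' hp.le] using
      add_natCast_mem_arc (a + (p : ZMod N)) (show n - p < m by omega)
  exact (lt_irrefl n) ((add_natCast_mem_arc_iff hn hn.le).1 (h hlast))

lemma cadj_add_natCast_iff {a : ZMod N} {u v : ℕ} (hu : u + 1 < N) (hv : v + 1 < N) :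
    cadj N (a + (u : ZMod N)) (a + (v : ZMod N)) ↔ v = u + 1 ∨ u = v + 1 := by
  unfold cadj
  rw [add_assoc, add_assoc, ← Nat.cast_add_one, ← Nat.cast_add_one,
    add_natCast_inj (by omega) hu, add_natCast_inj (by omega) hv]

lemma isPathOn_arc (a : ZMod N) {n : ℕ} (hn : 1 ≤ n) (hnN : n < N) :
    IsPathOn (cadj N) (arc a n) := by
  refine ⟨n - 1, fun i => a + (i : ℕ), fun i j hij => ?_, ?_, fun i j => ?_⟩
  · exact Fin.ext ((add_natCast_inj (by omega) (by omega)).1 hij)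
  · ext x
    simp only [mem_arc, mem_image, mem_univ, true_and]
    exact ⟨fun ⟨k, hk, hx⟩ => ⟨⟨k, by omega⟩, hx⟩, fun ⟨i, hx⟩ => ⟨i, by omega, hx⟩⟩
  · rw [cadj_add_natCast_iff (by omega) (by omega)]
    omega

lemma bounds_of_prec_arc {a : ZMod N} {n p m : ℕ} (hpm : p + m ≤ n) (hn : n ≤ N)
    (h : Prec (cadj N) (arc (a + (p : ZMod N)) m) (arc a n)) : 1 ≤ p ∧ p + m + 1 ≤ n := by
  by_contra! hend
  refine h.2 ?_
  rcases Nat.eq_zero_or_pos p with rfl | hp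
  · rw [Nat.cast_zero, add_zero, ← Nat.add_sub_cancel' (le_of_add_le_right hpm), ← arc_union_arc,
      union_sdiff_cancel_left (disjoint_arc_arc a (by omega))]
    exact connOn_arc _ _
  · rw [show n = p + m by omega, ← arc_union_arc,
      union_sdiff_cancel_right (disjoint_arc_arc a (by omega))]
    exact connOn_arc _ _

lemma spade_arc_arc {a : ZMod N} {p q m : ℕ} (hp : 1 ≤ p) (hm : 1 ≤ m) (hpq : p < q)
    (hqm : q + m < N) : Spade (cadj N) (arc a p) (arc (a + (q : ZMod N)) m) := by
  have hsplit : ∀ x ∈ arc a p, ∀ y ∈ arc (a + (q : ZMod N)) m,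
      ∃ k l : ℕ, x = a + (k : ZMod N) ∧ y = a + (l : ZMod N) ∧ k < p ∧ q ≤ l ∧ l < q + m := by
    intro x hx y hy
    obtain ⟨k, hk, rfl⟩ := mem_arc.1 hx
    obtain ⟨l, hl, rfl⟩ := mem_arc.1 hy
    exact ⟨k, q + l, rfl, by push_cast; ring, hk, by omega, by omega⟩
  have hdisj : Disjoint (arc a p) (arc (a + (q : ZMod N)) m) :=
    disjoint_left.2 fun x hx hx' => by
      obtain ⟨k, l, rfl, hkl, hk, hl⟩ := hsplit x hx x hx'
      have := (add_natCast_inj (by omega) (by omega)).1 hkl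
      omega
  have hne : (arc a p).Nonempty := ⟨_, add_natCast_mem_arc a (k := 0) hp⟩
  have hne' : (arc (a + (q : ZMod N)) m).Nonempty := ⟨_, add_natCast_mem_arc _ (k := 0) hm⟩
  refine ⟨disjoint_iff_inter_eq_empty.1 hdisj, not_connOn_union hne hne' hdisj fun x hx y hy => ?_⟩
  obtain ⟨k, l, rfl, rfl, hk, hl⟩ := hsplit x hx y hy
  rw [cadj_add_natCast_iff (by omega) (by omega)]
  omega

lemma arc_erase {a : ZMod N} {n j : ℕ} (hj : j < n) (hn : n ≤ N) :
    (arc a n).erase (a + (j : ZMod N)) =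
      arc a j ∪ arc (a + ((j + 1 : ℕ) : ZMod N)) (n - (j + 1)) := by
  ext x
  simp only [mem_erase, mem_union]
  constructor
  · rintro ⟨hxj, hx⟩
    obtain ⟨k, hk, rfl⟩ := mem_arc.1 hx
    rcases lt_or_gt_of_ne (fun h : k = j => hxj (h ▸ rfl)) with hkj | hkj
    · exact .inl (add_natCast_mem_arc a hkj)
    · exact .inr ((add_natCast_mem_arc_add_iff (by omega) (by omega)).2 ⟨hkj, by omega⟩)
  · rintro (hx | hx)
    · obtain ⟨k, hk, rfl⟩ := mem_arc.1 hx
      exact ⟨fun h => by have := (add_natCast_inj (by omega) (by omega)).1 h; omega,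
        add_natCast_mem_arc a (by omega)⟩
    · obtain ⟨k, hk, rfl⟩ := mem_arc.1 hx
      rw [add_assoc, ← Nat.cast_add]
      exact ⟨fun h => by have := (add_natCast_inj (by omega) (by omega)).1 h; omega,
        add_natCast_mem_arc a (by omega)⟩

lemma mem_iev_arc {a : ZMod N} {n j : ℕ} (hn : Odd n) (hnN : n < N) (hj : j < n)
    (hjodd : Odd j) :
    a + (j : ZMod N) ∈ Iev (cadj N) (arc a n) := by
  have hjn : j + 2 ≤ n := by
    obtain ⟨u, rfl⟩ := hn
    obtain ⟨v, rfl⟩ := hjodd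
    omega
  refine ⟨add_natCast_mem_arc a hj, arc a j, arc (a + ((j + 1 : ℕ) : ZMod N)) (n - (j + 1)),
    ⟨isPathOn_arc a hjodd.pos (by omega), by rwa [card_arc a (by omega)]⟩,
    ⟨isPathOn_arc _ (by omega) (by omega), ?_⟩,
    spade_arc_arc hjodd.pos (by omega) (by omega) (by omega), arc_erase hj hnN.le⟩
  rw [card_arc _ (by omega)]
  obtain ⟨u, rfl⟩ := hn
  obtain ⟨v, rfl⟩ := hjodd
  exact ⟨u - v - 1, by omega⟩

lemma ne_add_of_spade_arc {a : ZMod N} {p p' m m' : ℕ} (hm : 1 ≤ m) (hm' : 1 ≤ m')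
    (hsp : Spade (cadj N) (arc (a + (p : ZMod N)) m) (arc (a + (p' : ZMod N)) m')) :
    p' ≠ p + m := by
  rintro rfl
  refine hsp.not_adj (connOn_arc _ _) (connOn_arc _ _) (add_natCast_mem_arc _ (k := m - 1)
    (by omega)) (add_natCast_mem_arc _ (k := 0) hm') (.inl ?_)
  rw [show p + m = p + (m - 1) + 1 by omega]
  push_cast
  ring

lemma lt_or_lt_of_spade_arc {a : ZMod N} {p p' m m' : ℕ} (hm : 1 ≤ m) (hm' : 1 ≤ m')
    (h : p + m < N) (h' : p' + m' < N)
    (hsp : Spade (cadj N) (arc (a + (p : ZMod N)) m) (arc (a + (p' : ZMod N)) m')) :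
    p + m < p' ∨ p' + m' < p := by
  have hdisj : ∀ k, p ≤ k → k < p + m → p' ≤ k → k < p' + m' → False := fun k h1 h2 h3 h4 =>
    disjoint_left.1 (disjoint_iff_inter_eq_empty.2 hsp.1)
      ((add_natCast_mem_arc_add_iff (by omega) h.le).2 ⟨h1, h2⟩)
      ((add_natCast_mem_arc_add_iff (by omega) h'.le).2 ⟨h3, h4⟩)
  have h1 := ne_add_of_spade_arc hm hm' hsp
  have h2 := ne_add_of_spade_arc hm' hm hsp.symm
  by_contra! hcon
  rcases le_or_gt p p' with hpp | hpp
  · exact hdisj p' hpp (by omega) le_rfl (by omega)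
  · exact hdisj p le_rfl (by omega) hpp.le (by omega)

variable [NeZero N]

lemma exists_mem_sub_one_notMem {C : Finset (ZMod N)} (hC : C.Nonempty) (hCu : C ≠ univ) :
    ∃ x ∈ C, x - 1 ∉ C := by
  by_contra! h
  obtain ⟨s, hs⟩ := hC
  have hsub : ∀ k : ℕ, s - k ∈ C := by
    intro k
    induction k with
    | zero => simpa using hs
    | succ k ih => simpa [sub_add_eq_sub_sub] using h _ ih
  refine hCu (eq_univ_of_forall fun y => ?_)
  simpa using hsub (s - y).val

lemma exists_compOf_eq_arc {D : Finset (ZMod N)} (hD : D ≠ univ) {x : ZMod N}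
    (hx : x - 1 ∉ D) :
    ∃ g < N, compOf (cadj N) D x = arc x g := by
  obtain ⟨t, ht⟩ : ∃ t, t ∉ D := by simpa [eq_univ_iff_forall] using hD
  have ht' : x + ((t - x).val : ZMod N) ∉ D := by rwa [ZMod.natCast_zmod_val, add_sub_cancel]
  have hex : ∃ k : ℕ, x + (k : ZMod N) ∉ D := ⟨_, ht'⟩
  have hmem : ∀ k < Nat.find hex, x + (k : ZMod N) ∈ D :=
    fun k hk => not_not.1 (Nat.find_min hex hk)
  refine ⟨Nat.find hex, (Nat.find_min' hex ht').trans_lt (ZMod.val_lt _), ?_⟩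
  ext y
  rw [mem_compOf]
  constructor
  · rintro ⟨hy, hxy⟩
    induction hxy with
    | refl => simpa using add_natCast_mem_arc x ((Nat.find_pos hex).2 (by simpa using hy))
    | @tail b c _ step ih =>
      obtain ⟨k, hk, rfl⟩ := mem_arc.1 (ih step.1)
      rcases step.2.2 with rfl | hc
      · rcases (by omega : k + 1 < Nat.find hex ∨ k + 1 = Nat.find hex) with hk1 | hk1
        · simpa [add_assoc] using add_natCast_mem_arc x hk1
        · exact (Nat.find_spec hex (by rw [← hk1]; push_cast; rwa [← add_assoc])).elim
      · obtain _ | k := k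
        · refine (hx ?_).elim
          rw [Nat.cast_zero, add_zero] at hc
          rw [hc, add_sub_cancel_right]
          exact step.2.1
        · rw [Nat.cast_succ, ← add_assoc, add_left_inj] at hc
          exact hc ▸ add_natCast_mem_arc x (by omega)
  · intro hy
    obtain ⟨k, hk, rfl⟩ := mem_arc.1 hy
    refine ⟨hmem k hk, ?_⟩
    clear hy
    induction k with
    | zero => simpa using .refl
    | succ k ih =>
      refine (ih (by omega)).tail ⟨hmem k (by omega), hmem (k + 1) hk, ?_⟩
      exact .inl (by push_cast; ring)

lemma card_comps {D : Finset (ZMod N)} (hD : D ≠ univ) :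
    #(comps (cadj N) D) = #{x ∈ D | x - 1 ∉ D} := by
  have hsubD : ∀ {s t}, t ∈ compOf (cadj N) D s → t ∈ D := fun ht => (mem_compOf.1 ht).1
  refine (card_nbij (compOf (cadj N) D) (fun x hx => mem_image_of_mem _ (mem_filter.1 hx).1)
    (fun x hx y hy hxy => ?_) (fun C hC => ?_)).symm
  · obtain ⟨g, -, hg⟩ := exists_compOf_eq_arc hD (mem_filter.1 hx).2
    have hyx : y ∈ compOf (cadj N) D x := hxy ▸ (mem_compOf.2 ⟨(mem_filter.1 hy).1, .refl⟩)
    obtain ⟨k, hk, rfl⟩ := mem_arc.1 (hg ▸ hyx)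
    obtain _ | k := k
    · simp
    · refine ((mem_filter.1 hy).2 (hsubD (s := x) ?_)).elim
      rw [hg]
      convert add_natCast_mem_arc x (show k < g by omega) using 1
      push_cast
      ring
  · obtain ⟨s, hs, rfl⟩ := mem_image.1 hC
    have hne : compOf (cadj N) D s ≠ univ :=
      fun h => hD (eq_univ_of_forall fun y => hsubD (h.symm ▸ mem_univ y))
    obtain ⟨x, hx, hx'⟩ := exists_mem_sub_one_notMem ⟨s, mem_compOf.2 ⟨hs, .refl⟩⟩ hne
    refine ⟨x, mem_filter.2 ⟨hsubD hx, fun hx1 => hx' ?_⟩, compOf_eq_compOf_of_mem hx⟩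
    exact mem_compOf.2
      ⟨hx1, (mem_compOf.1 hx).2.tail ⟨hsubD hx, hx1, .inr (sub_add_cancel x 1).symm⟩⟩

lemma exists_eq_arc_of_connOn {I : Finset (ZMod N)} (hI : ConnOn (cadj N) I) (hne : I.Nonempty)
    (hu : I ≠ univ) : ∃ a, I = arc a #I := by
  obtain ⟨x, hx, hx'⟩ := exists_mem_sub_one_notMem hne hu
  obtain ⟨g, hg, hcomp⟩ := exists_compOf_eq_arc hu hx'
  rw [compOf_eq_self hI hx] at hcomp
  exact ⟨x, by rw [hcomp, card_arc x hg.le]⟩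

/-- A path through all of `ZMod N` would make both neighbours `x ± 1` of its first vertex
`x = f 0` equal to `f 1`. -/
lemma IsPathOn.ne_univ (hN : 3 ≤ N) {I : Finset (ZMod N)} (h : IsPathOn (cadj N) I) :
    I ≠ univ := by
  rintro rfl
  obtain ⟨m, f, -, himg, hadj⟩ := h
  have hsurj : ∀ y, ∃ i, f i = y := fun y => by simpa using (himg ▸ mem_univ y : y ∈ image f univ)
  obtain ⟨i, hi⟩ := hsurj (f 0 + 1)
  obtain ⟨j, hj⟩ := hsurj (f 0 - 1)
  have hi1 := (hadj 0 i).1 (.inl hi)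
  have hj1 := (hadj 0 j).1 (.inr (by rw [hj, sub_add_cancel]))
  have hij : i = j := Fin.ext (by simp at hi1 hj1; omega)
  have h2 : ((2 : ℕ) : ZMod N) = 0 := by
    have := hi.symm.trans (hij ▸ hj)
    push_cast
    linear_combination this
  have := Nat.le_of_dvd two_pos ((ZMod.natCast_eq_zero_iff 2 N).1 h2)
  omega

lemma CalI1.exists_eq_arc (hN : 3 ≤ N) (hodd : Odd N) {I : Finset (ZMod N)}
    (hI : CalI1 (cadj N) I) : ∃ a, I = arc a #I ∧ #I + 2 ≤ N := by
  have hu := hI.1.ne_univ hN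
  obtain ⟨a, ha⟩ := exists_eq_arc_of_connOn hI.1.connOn (card_pos.1 hI.2.pos) hu
  refine ⟨a, ha, ?_⟩
  have hlt : #I < N := by simpa using (card_lt_iff_ne_univ I).2 hu
  obtain ⟨u, hu⟩ := hI.2
  obtain ⟨v, hv⟩ := hodd
  omega

end Cycle

section CycleFamily

variable {N : ℕ} [NeZero N] {B : Finset (Finset (ZMod N))}

lemma exists_offset_of_mem_children (hN : 3 ≤ N) (hodd : Odd N) (hB : B ∈ phiSet (cadj N))
    {I J : Finset (ZMod N)} (hI : I ∈ B) {a : ZMod N} (ha : I = arc a #I) (hIN : #I + 2 ≤ N)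
    (hJ : J ∈ children B I) :
    ∃ p, 1 ≤ p ∧ p + #J + 1 ≤ #I ∧ J = arc (a + (p : ZMod N)) #J := by
  obtain ⟨hJB, hJI⟩ := mem_filter.1 (maxElts_subset hJ)
  have hJne := nonempty_of_mem_phiSet hB hJB
  obtain ⟨b, hb, -⟩ := (hB.1 J hJB).exists_eq_arc hN hodd
  have hsub : arc b #J ⊆ arc a #I := hb ▸ ha ▸ hJI.subset
  obtain ⟨p, hp, rfl⟩ := exists_eq_add_of_arc_subset_arc (card_pos.2 hJne) (by omega) hsub
  have hprec := hB.2.1.prec_of_ssubset hJB hI hJI hJne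
  rw [hb, ha] at hprec
  obtain ⟨h1, h2⟩ := bounds_of_prec_arc hp (by omega) hprec
  exact ⟨p, h1, h2, hb⟩

lemma sum_card_children_add_one (hN : 3 ≤ N) (hodd : Odd N) (hB : B ∈ phiSet (cadj N))
    {I : Finset (ZMod N)} (hI : I ∈ B) : ∑ J ∈ children B I, (#J + 1) = #I - 1 := by
  obtain ⟨a, ha, hIN⟩ := (hB.1 I hI).exists_eq_arc hN hodd
  have hJB : ∀ J ∈ children B I, J ∈ B := fun J hJ => (mem_filter.1 (maxElts_subset hJ)).1
  choose! p hp using fun J (hJ : J ∈ children B I) =>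
    exists_offset_of_mem_children hN hodd hB hI ha hIN hJ
  refine sum_add_one_eq_of_cover_odd _ p card (hB.1 I hI).2 (fun J hJ => (hB.1 J (hJB J hJ)).2)
    (fun J hJ => ⟨(hp J hJ).1, (hp J hJ).2.1⟩) (fun J hJ J' hJ' hne => ?_) (fun j hj hjodd => ?_)
  · have hsp := hB.2.1.spade_of_mem_maxElts (filter_subset _ _) hJ hJ' hne
    rw [(hp J hJ).2.2, (hp J' hJ').2.2] at hsp
    exact lt_or_lt_of_spade_arc (card_pos.2 (nonempty_of_mem_phiSet hB (hJB J hJ)))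
      (card_pos.2 (nonempty_of_mem_phiSet hB (hJB J' hJ'))) (by have := (hp J hJ).2.1; omega)
      (by have := (hp J' hJ').2.1; omega) hsp
  · have hs : a + (j : ZMod N) ∈ Iev (cadj N) I := by
      rw [ha]
      exact mem_iev_arc (hB.1 I hI).2 (by omega) hj hjodd
    obtain ⟨J, hJ, hsJ⟩ := exists_mem_children_of_mem_iev hB.2.2 hI hs
    rw [(hp J hJ).2.2] at hsJ
    have := (hp J hJ).2.1
    exact ⟨J, hJ, (add_natCast_mem_arc_add_iff (by omega) (by omega)).1 hsJ⟩

lemma two_mul_card_below (hN : 3 ≤ N) (hodd : Odd N) (hB : B ∈ phiSet (cadj N))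
    {I : Finset (ZMod N)} (hI : I ∈ B) : 2 * #(below B I) = #I + 1 := by
  induction hc : #I using Nat.strong_induction_on generalizing I with
  | _ n ih =>
    have hJ : ∀ J ∈ children B I, J ∈ B ∧ J ⊂ I := fun J hJ => mem_filter.1 (maxElts_subset hJ)
    rw [hB.2.1.isLaminar.card_below_eq_one_add_sum (fun K hK => nonempty_of_mem_phiSet hB hK) hI,
      mul_add, mul_sum, sum_congr rfl fun J hJ' =>
        ih #J (hc ▸ card_lt_card (hJ J hJ').2) (hJ J hJ').1 rfl,
      sum_card_children_add_one hN hodd hB hI, hc]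
    have := hc ▸ card_pos.2 (nonempty_of_mem_phiSet hB hI)
    omega

lemma two_mul_card_eq (hN : 3 ≤ N) (hodd : Odd N) (hB : B ∈ phiSet (cadj N)) :
    2 * #B = #(suppB B) + #(maxElts B) := by
  have hlam := hB.2.1.isLaminar
  rw [hlam.card_eq_sum_card_below fun K hK => nonempty_of_mem_phiSet hB hK,
    hlam.card_suppB_eq_sum, mul_sum,
    sum_congr rfl fun M hM => two_mul_card_below hN hodd hB (maxElts_subset hM),
    sum_add_distrib, sum_const, smul_eq_mul, mul_one]

/-- The point is `a + n` for `M = arc a n`: it is not in `M` as `n < N`, and not in another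
maximal member, which would then be adjacent to `M` and so not spade to it. -/
lemma card_filter_notMem_suppB_sub_one_mem (hN : 3 ≤ N) (hodd : Odd N)
    (hB : B ∈ phiSet (cadj N)) {M : Finset (ZMod N)} (hM : M ∈ maxElts B) :
    #{x ∈ univ \ suppB B | x - 1 ∈ M} = 1 := by
  have hMB := maxElts_subset hM
  obtain ⟨a, ha, hMN⟩ := (hB.1 M hMB).exists_eq_arc hN hodd
  set n := #M
  have hn : 1 ≤ n := card_pos.2 (nonempty_of_mem_phiSet hB hMB)
  have hlast : a + (n : ZMod N) - 1 ∈ M := by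
    rw [ha, show a + (n : ZMod N) - 1 = a + ((n - 1 : ℕ) : ZMod N) by
      rw [Nat.cast_sub hn, Nat.cast_one]; ring]
    exact add_natCast_mem_arc a (by omega)
  rw [card_eq_one]
  refine ⟨a + n, ext fun x => ?_⟩
  simp only [mem_filter, mem_sdiff, mem_univ, true_and, mem_singleton]
  constructor
  · rintro ⟨hxE, hx⟩
    rw [ha] at hx
    obtain ⟨k, hk, hxk⟩ := mem_arc.1 hx
    have hx' : x = a + ((k + 1 : ℕ) : ZMod N) := by
      rw [Nat.cast_succ, ← add_assoc, hxk, sub_add_cancel]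
    rcases (by omega : k + 1 < n ∨ k + 1 = n) with hkn | hkn
    · exact (hxE (mem_suppB_iff.2 ⟨M, hM, ha ▸ hx' ▸ add_natCast_mem_arc a hkn⟩)).elim
    · rw [hx', hkn]
  · rintro rfl
    refine ⟨fun hE => ?_, hlast⟩
    obtain ⟨M', hM', hxM'⟩ := mem_suppB_iff.1 hE
    by_cases hMM : M' = M
    · rw [hMM, ha] at hxM'
      exact lt_irrefl n ((add_natCast_mem_arc_iff (by omega) (by omega)).1 hxM')
    · refine (hB.2.1.spade_of_mem_maxElts subset_rfl hM hM' (Ne.symm hMM)).not_adj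
        (hB.1 M hMB).1.connOn (hB.1 M' (maxElts_subset hM')).1.connOn hlast hxM' (.inl ?_)
      ring

lemma card_filter_compl_suppB (hN : 3 ≤ N) (hodd : Odd N) (hB : B ∈ phiSet (cadj N)) :
    #{x ∈ univ \ suppB B | x - 1 ∉ univ \ suppB B} = #(maxElts B) := by
  have hsplit : {x ∈ univ \ suppB B | x - 1 ∉ univ \ suppB B} =
      (maxElts B).biUnion fun M => {x ∈ univ \ suppB B | x - 1 ∈ M} := by
    ext x
    simp only [mem_filter, mem_biUnion, mem_sdiff, mem_univ, true_and, not_not, mem_suppB_iff]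
    exact ⟨fun ⟨hx, M, hM, hxM⟩ => ⟨M, hM, hx, hxM⟩, fun ⟨M, hM, hx, hxM⟩ => ⟨hx, M, hM, hxM⟩⟩
  rw [hsplit, card_biUnion, sum_congr rfl fun M hM =>
    card_filter_notMem_suppB_sub_one_mem hN hodd hB hM, sum_const, smul_eq_mul, mul_one]
  intro M hM M' hM' hne
  refine disjoint_left.2 fun x hx hx' => ?_
  exact disjoint_left.1 (hB.2.1.isLaminar.disjoint_of_mem_maxElts hM hM' hne)
    (mem_filter.1 hx).2 (mem_filter.1 hx').2

end CycleFamily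

/-- for `∅ ≠ B ∈ phi`, `|B| = (N-1)/2` iff every connected component of
`S ∖ supp(B)` has cardinality 1, except exactly one, which has cardinality 2. -/
theorem statement12 (N : ℕ) [NeZero N] (hN : 3 ≤ N) (hodd : Odd N)
    (B : Finset (Finset (ZMod N))) (hB : B ∈ phiSet (cadj N)) (hne : B ≠ ∅) :
    (B.card = (N - 1) / 2 ↔
      ∃ C ∈ comps (cadj N) (Finset.univ \ suppB B), C.card = 2 ∧
        ∀ C' ∈ comps (cadj N) (Finset.univ \ suppB B), C' ≠ C → C'.card = 1) := by
  obtain ⟨I, hI⟩ := nonempty_iff_ne_empty.2 hne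
  obtain ⟨x, hx⟩ := nonempty_of_mem_phiSet hB hI
  have hD : univ \ suppB B ≠ univ := fun h =>
    (mem_sdiff.1 (h ▸ mem_univ x)).2 (mem_biUnion.2 ⟨I, hI, hx⟩)
  have hcomps : #(comps (cadj N) (univ \ suppB B)) = #(maxElts B) :=
    (card_comps hD).trans (card_filter_compl_suppB hN hodd hB)
  have hcount := two_mul_card_eq hN hodd hB
  have hsupp : #(suppB B) ≤ N := (card_le_univ _).trans (ZMod.card N).le
  rw [exists_eq_two_iff_sum_eq_card_add_one _ _
    fun C hC => card_pos.2 (nonempty_of_mem_comps hC), sum_card_comps, card_univ_sdiff, ZMod.card,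
    hcomps]
  obtain ⟨k, rfl⟩ := hodd
  omega
end

section
/- Let N ≥ 3 be odd, (S,E) the cycle of length N, Vbar = V/(F·e_S), and fix an edge ee in E. Let B in phi(Vbar). If supp(B) ∩ ee = ∅ and |B| = (N−1)/2, then [ee] lies in L_B. -/
/-!
Removing the edge `{t, t + 1}` leaves the path `J = S ∖ {t, t + 1}` on `n = N - 2` vertices.
Numbering `J` by `x ↦ (x - (t + 2)).val` identifies it with the path `0 — 1 — ⋯ — (n - 1)`, so
every member of `B` becomes an interval `[a, b] ⊆ [0, n)`, and by (P0) any two of them are either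
separated by a gap or strictly nested. Hence the `2 |B| = n + 1` numbers `a` and `b + 1` are
pairwise distinct elements of `[0, n]`, i.e. all of them, and a position `s` lies in
`#{a ≤ s} - #{b + 1 ≤ s} ≡ s + 1 (mod 2)` members of `B`. As `J^{ev}` consists of the odd
positions, this says that `∑_{I ∈ B} e_I = e_{J^{odd}}` holds already in `V`.
-/

section AdjEmbedsOn

def AdjEmbedsOn {S T : Type} (adj : S → S → Prop) (adj' : T → T → Prop) (D : Set S)
    (f : S → T) : Prop :=
  Function.Injective f ∧ ∀ x ∈ D, ∀ y ∈ D, adj' (f x) (f y) ↔ adj x y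

variable {S T : Type} [DecidableEq T] {adj : S → S → Prop} {adj' : T → T → Prop}
  {f : S → T} {D : Set S}

theorem connOn_image_iff (hf : AdjEmbedsOn adj adj' D f) {I : Finset S} (hI : ↑I ⊆ D) :
    ConnOn adj' (I.image f) ↔ ConnOn adj I := by
  constructor
  · intro h x hx y hy
    have : Nonempty S := ⟨x⟩
    have hchain := h _ (Finset.mem_image_of_mem f hx) _ (Finset.mem_image_of_mem f hy)
    rw [← Function.leftInverse_invFun hf.1 x, ← Function.leftInverse_invFun hf.1 y]
    refine Relation.ReflTransGen.lift (Function.invFun f) ?_ _ _ hchain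
    rintro _ _ ⟨hfa, hfb, hab⟩
    obtain ⟨a, ha, rfl⟩ := Finset.mem_image.1 hfa
    obtain ⟨b, hb, rfl⟩ := Finset.mem_image.1 hfb
    rw [Function.onFun, Function.leftInverse_invFun hf.1 a, Function.leftInverse_invFun hf.1 b]
    exact ⟨ha, hb, (hf.2 a (hI ha) b (hI hb)).1 hab⟩
  · intro h _ hfx _ hfy
    obtain ⟨x, hx, rfl⟩ := Finset.mem_image.1 hfx
    obtain ⟨y, hy, rfl⟩ := Finset.mem_image.1 hfy
    refine Relation.ReflTransGen.lift f ?_ _ _ (h x hx y hy)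
    rintro a b ⟨ha, hb, hab⟩
    exact ⟨Finset.mem_image_of_mem f ha, Finset.mem_image_of_mem f hb,
      (hf.2 a (hI ha) b (hI hb)).2 hab⟩

variable [DecidableEq S]

theorem mem_ioddF {I : Finset S} {x : S} : x ∈ IoddF adj I ↔ x ∈ I ∧ x ∉ Iev adj I := by
  classical
  exact Finset.mem_filter

theorem connOn_of_isPathOn {I : Finset S} (h : IsPathOn adj I) : ConnOn adj I := by
  obtain ⟨m, g, -, rfl, hg⟩ := h
  let R := fun a b => a ∈ Finset.univ.image g ∧ b ∈ Finset.univ.image g ∧ adj a b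
  have : Std.Symm R := ⟨by
    rintro _ _ ⟨hi, hj, h⟩
    obtain ⟨i, -, rfl⟩ := Finset.mem_image.1 hi
    obtain ⟨j, -, rfl⟩ := Finset.mem_image.1 hj
    exact ⟨Finset.mem_image_of_mem g (Finset.mem_univ j),
      Finset.mem_image_of_mem g (Finset.mem_univ i), (hg j i).2 (((hg i j).1 h).symm)⟩⟩
  have from_zero : ∀ k : ℕ, (hk : k ≤ m) → Relation.ReflTransGen R (g 0) (g ⟨k, by omega⟩) := by
    intro k hk
    induction k with
    | zero => rfl
    | succ k ih =>
      refine (ih (by omega)).tail ⟨Finset.mem_image_of_mem g (Finset.mem_univ _),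
        Finset.mem_image_of_mem g (Finset.mem_univ _), (hg _ _).2 (Or.inl rfl)⟩
  intro _ hi _ hj
  obtain ⟨i, -, rfl⟩ := Finset.mem_image.1 hi
  obtain ⟨j, -, rfl⟩ := Finset.mem_image.1 hj
  exact ((Relation.ReflTransGen.stdSymm.symm _ _ (from_zero i (by omega)))).trans
    (from_zero j (by omega))

theorem isPathOn_image_iff (hf : AdjEmbedsOn adj adj' D f) {I : Finset S} (hI : ↑I ⊆ D) :
    IsPathOn adj' (I.image f) ↔ IsPathOn adj I := by
  constructor
  · rintro ⟨m, g, hg, hIg, hgadj⟩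
    have hg_mem : ∀ i, g i ∈ I.image f := fun i =>
      hIg ▸ Finset.mem_image_of_mem g (Finset.mem_univ i)
    choose h hhI hfh using fun i => Finset.mem_image.1 (hg_mem i)
    have hfh' : f ∘ h = g := funext hfh
    refine ⟨m, h, Function.Injective.of_comp (hfh' ▸ hg), ?_, fun i j => ?_⟩
    · apply Finset.image_injective hf.1
      rw [hIg, Finset.image_image, hfh']
    · rw [← hf.2 _ (hI (hhI i)) _ (hI (hhI j)), hfh, hfh, hgadj]
  · rintro ⟨m, g, hg, rfl, hgadj⟩
    refine ⟨m, f ∘ g, hf.1.comp hg, Finset.image_image, fun i j => ?_⟩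
    have hmem : ∀ i, g i ∈ D := fun i => hI (Finset.mem_image_of_mem g (Finset.mem_univ i))
    rw [Function.comp_apply, Function.comp_apply, hf.2 _ (hmem i) _ (hmem j), hgadj]

theorem calI1_image_iff (hf : AdjEmbedsOn adj adj' D f) {I : Finset S} (hI : ↑I ⊆ D) :
    CalI1 adj' (I.image f) ↔ CalI1 adj I := by
  rw [CalI1, CalI1, isPathOn_image_iff hf hI, Finset.card_image_of_injective I hf.1]

theorem spade_image_iff (hf : AdjEmbedsOn adj adj' D f) {I J : Finset S} (hI : ↑I ⊆ D)
    (hJ : ↑J ⊆ D) :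
    Spade adj' (I.image f) (J.image f) ↔ Spade adj I J := by
  rw [Spade, Spade, ← Finset.image_inter _ _ hf.1, Finset.image_eq_empty, ← Finset.image_union,
    connOn_image_iff hf (by rw [Finset.coe_union]; exact Set.union_subset hI hJ)]

theorem prec_image_iff (hf : AdjEmbedsOn adj adj' D f) {I J : Finset S} (hJ : ↑J ⊆ D) :
    Prec adj' (I.image f) (J.image f) ↔ Prec adj I J := by
  rw [Prec, Prec, Finset.image_ssubset_image hf.1, ← Finset.image_sdiff _ _ hf.1,
    connOn_image_iff hf ((Finset.coe_subset.2 Finset.sdiff_subset).trans hJ)]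

theorem p0_image_iff (hf : AdjEmbedsOn adj adj' D f) {B : Finset (Finset S)}
    (hB : ∀ I ∈ B, ↑I ⊆ D) :
    P0 adj' (B.image (Finset.image f)) ↔ P0 adj B := by
  simp only [P0, Finset.forall_mem_image, (Finset.image_injective hf.1).eq_iff]
  refine forall₂_congr fun I hI => forall₂_congr fun J hJ => ?_
  rw [spade_image_iff hf (hB I hI) (hB J hJ), prec_image_iff hf (hB J hJ),
    prec_image_iff hf (hB I hI)]

theorem mem_iev_image_iff (hf : AdjEmbedsOn adj adj' D f) {I : Finset S} (hI : ↑I ⊆ D) {x : S} :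
    f x ∈ Iev adj' (I.image f) ↔ x ∈ Iev adj I := by
  have hsub : ∀ {K L : Finset S}, I.erase x = K ∪ L → ↑K ⊆ D := fun he =>
    (Finset.coe_subset.2 ((Finset.subset_union_left).trans (he ▸ Finset.erase_subset x I))).trans hI
  constructor
  · rintro ⟨hx, I', I'', h', h'', hsp, he⟩
    rw [← Finset.image_erase hf.1] at he
    obtain ⟨K', -, rfl⟩ := Finset.subset_image_iff.1 (he ▸ Finset.subset_union_left)
    obtain ⟨K'', -, rfl⟩ := Finset.subset_image_iff.1 (he ▸ Finset.subset_union_right)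
    rw [← Finset.image_union] at he
    have he := Finset.image_injective hf.1 he
    have hK'' : ↑K'' ⊆ D := hsub (Finset.union_comm K' K'' ▸ he)
    exact ⟨hf.1.mem_finset_image.1 hx, K', K'', (calI1_image_iff hf (hsub he)).1 h',
      (calI1_image_iff hf hK'').1 h'', (spade_image_iff hf (hsub he) hK'').1 hsp, he⟩
  · rintro ⟨hx, K', K'', h', h'', hsp, he⟩
    have hK'' : ↑K'' ⊆ D := hsub (Finset.union_comm K' K'' ▸ he)
    exact ⟨Finset.mem_image_of_mem f hx, K'.image f, K''.image f,
      (calI1_image_iff hf (hsub he)).2 h', (calI1_image_iff hf hK'').2 h'',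
      (spade_image_iff hf (hsub he) hK'').2 hsp,
      by rw [← Finset.image_erase hf.1, he, Finset.image_union]⟩

end AdjEmbedsOn

def IntervalsLaminar {ι : Type} (B : Finset ι) (a b : ι → ℕ) : Prop :=
  ∀ i ∈ B, ∀ j ∈ B, i ≠ j → b i + 1 < a j ∨ b j + 1 < a i ∨
    (a j < a i ∧ b i < b j) ∨ (a i < a j ∧ b j < b i)

namespace IntervalsLaminar

open Finset

variable {ι : Type} {B : Finset ι} {a b : ι → ℕ}

theorem injOn_left (hab : ∀ i ∈ B, a i ≤ b i) (h : IntervalsLaminar B a b) :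
    Set.InjOn a B := fun i hi j hj hij => by
  by_contra hne
  have := h i hi j hj hne
  have := hab i hi
  have := hab j hj
  omega

theorem injOn_right_add_one (hab : ∀ i ∈ B, a i ≤ b i) (h : IntervalsLaminar B a b) :
    Set.InjOn (b · + 1) B := fun i hi j hj hij => by
  by_contra hne
  have := h i hi j hj hne
  have := hab i hi
  have := hab j hj
  simp only at hij
  omega

theorem disjoint_image (hab : ∀ i ∈ B, a i ≤ b i) (h : IntervalsLaminar B a b) :
    Disjoint (B.image a) (B.image (b · + 1)) := by
  simp only [disjoint_left, mem_image, not_exists, not_and]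
  rintro _ ⟨i, hi, rfl⟩ j hj hij
  have := hab i hi
  have := hab j hj
  rcases eq_or_ne i j with rfl | hne
  · omega
  · have := h i hi j hj hne
    omega

theorem image_union_image_eq_range {n : ℕ} (hab : ∀ i ∈ B, a i ≤ b i)
    (hbn : ∀ i ∈ B, b i < n) (h : IntervalsLaminar B a b) (hcard : 2 * B.card = n + 1) :
    B.image a ∪ B.image (b · + 1) = range (n + 1) := by
  refine eq_of_subset_of_card_le (fun m hm => ?_) ?_
  · simp only [mem_union, mem_image, mem_range] at hm ⊢
    rcases hm with ⟨i, hi, rfl⟩ | ⟨i, hi, rfl⟩ <;> linarith [hab i hi, hbn i hi]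
  · rw [card_union_of_disjoint (h.disjoint_image hab), card_image_of_injOn (h.injOn_left hab),
      card_image_of_injOn (h.injOn_right_add_one hab), card_range]
    omega

theorem sum_indicator_eq {n s : ℕ} (hab : ∀ i ∈ B, a i ≤ b i) (hbn : ∀ i ∈ B, b i < n)
    (h : IntervalsLaminar B a b) (hcard : 2 * B.card = n + 1) (hs : s ≤ n) :
    ∑ i ∈ B, (if a i ≤ s ∧ s ≤ b i then 1 else 0 : ZMod 2) = s + 1 := by
  have hsplit : ∀ i ∈ B, (if a i ≤ s ∧ s ≤ b i then 1 else 0 : ZMod 2) =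
      (if a i ≤ s then 1 else 0) + (if b i + 1 ≤ s then 1 else 0) := fun i hi => by
    have := hab i hi
    split_ifs <;> first | omega | decide
  have hle : (range (n + 1)).filter (· ≤ s) = range (s + 1) := by
    ext m
    simp only [mem_filter, mem_range]
    omega
  rw [sum_congr rfl hsplit, sum_add_distrib,
    ← sum_image (f := fun m => if m ≤ s then (1 : ZMod 2) else 0) (h.injOn_left hab),
    ← sum_image (f := fun m => if m ≤ s then (1 : ZMod 2) else 0) (h.injOn_right_add_one hab),
    ← sum_union (h.disjoint_image hab), h.image_union_image_eq_range hab hbn hcard, sum_boole,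
    hle, card_range]
  push_cast
  rfl

end IntervalsLaminar

def pathAdj (k l : ℕ) : Prop := l = k + 1 ∨ k = l + 1

namespace pathAdj

theorem connOn_iff_ordConnected {K : Finset ℕ} :
    ConnOn pathAdj K ↔ (K : Set ℕ).OrdConnected := by
  constructor
  · refine fun h => ⟨fun x hx z hz y hy => ?_⟩
    induction h x hx z hz generalizing y with
    | refl => rwa [le_antisymm hy.2 hy.1]
    | @tail b c _ hbc ih =>
      obtain ⟨hb, hc, hbc⟩ := hbc
      obtain ⟨hxy, hyc⟩ := hy
      by_cases hyb : y ≤ b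
      · exact ih hb y ⟨hxy, hyb⟩
      · have : y = c := by rcases hbc with hbc | hbc <;> omega
        rwa [this]
  · intro h
    have : Std.Symm fun a b => a ∈ K ∧ b ∈ K ∧ pathAdj a b :=
      ⟨fun _ _ ⟨ha, hb, hab⟩ => ⟨hb, ha, hab.symm⟩⟩
    have up : ∀ x ∈ K, ∀ z ∈ K, x ≤ z →
        Relation.ReflTransGen (fun a b => a ∈ K ∧ b ∈ K ∧ pathAdj a b) x z := by
      intro x hx z hz hxz
      induction z, hxz using Nat.le_induction with
      | base => rfl
      | succ z hxz ih =>
        have hzK : z ∈ K := h.out hx hz ⟨hxz, by omega⟩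
        exact (ih hzK).tail ⟨hzK, hz, Or.inl rfl⟩
    intro x hx z hz
    rcases le_total x z with hxz | hzx
    · exact up x hx z hz hxz
    · exact Relation.ReflTransGen.stdSymm.symm _ _ (up z hz x hx hzx)

theorem connOn_Icc (a b : ℕ) : ConnOn pathAdj (Finset.Icc a b) := by
  rw [connOn_iff_ordConnected, Finset.coe_Icc]
  exact Set.ordConnected_Icc

theorem isPathOn_Icc {a b : ℕ} (hab : a ≤ b) : IsPathOn pathAdj (Finset.Icc a b) := by
  refine ⟨b - a, fun i => a + i, fun i j hij => Fin.ext (by simpa using hij), ?_,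
    fun i j => by simp only [pathAdj]; omega⟩
  ext k
  simp only [Finset.mem_Icc, Finset.mem_image, Finset.mem_univ, true_and]
  exact ⟨fun hk => ⟨⟨k - a, by omega⟩, by dsimp only; omega⟩, by rintro ⟨i, rfl⟩; omega⟩

theorem exists_eq_Icc_of_isPathOn {K : Finset ℕ} (h : IsPathOn pathAdj K) :
    ∃ a b, a ≤ b ∧ K = Finset.Icc a b := by
  have hne : K.Nonempty := by
    obtain ⟨m, g, -, rfl, -⟩ := h
    exact Finset.univ_nonempty.image g
  have hconn := connOn_iff_ordConnected.1 (connOn_of_isPathOn h)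
  refine ⟨K.min' hne, K.max' hne, K.min'_le_max' hne, ?_⟩
  ext k
  rw [Finset.mem_Icc]
  exact ⟨fun hk => ⟨K.min'_le k hk, K.le_max' k hk⟩,
    fun hk => hconn.out (K.min'_mem hne) (K.max'_mem hne) hk⟩

theorem Icc_sep_of_spade {a b a' b' : ℕ}
    (h : Spade pathAdj (Finset.Icc a b) (Finset.Icc a' b')) : b + 1 < a' ∨ b' + 1 < a := by
  obtain ⟨hdisj, hconn⟩ := h
  by_contra! hnear
  have hmeet : ∀ k, ¬ (a ≤ k ∧ k ≤ b ∧ a' ≤ k ∧ k ≤ b') := fun k hk =>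
    Finset.notMem_empty k (hdisj ▸ Finset.mem_inter.2 ⟨Finset.mem_Icc.2 ⟨hk.1, hk.2.1⟩,
      Finset.mem_Icc.2 hk.2.2⟩)
  have := hmeet a
  have := hmeet a'
  apply hconn
  convert connOn_Icc (min a a') (max b b') using 1
  ext k
  simp only [Finset.mem_union, Finset.mem_Icc]
  omega

theorem Icc_nested_of_prec {a b a' b' : ℕ} (hab : a ≤ b)
    (h : Prec pathAdj (Finset.Icc a b) (Finset.Icc a' b')) : a' < a ∧ b < b' := by
  obtain ⟨hss, hconn⟩ := h
  obtain ⟨ha, hb⟩ := (Finset.Icc_subset_Icc_iff hab).1 hss.subset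
  by_contra! hnested
  apply hconn
  rcases (by omega : a' = a ∨ (a' < a ∧ b = b')) with h | h
  · convert connOn_Icc (b + 1) b' using 1
    ext k
    simp only [Finset.mem_sdiff, Finset.mem_Icc]
    omega
  · convert connOn_Icc a' (a - 1) using 1
    ext k
    simp only [Finset.mem_sdiff, Finset.mem_Icc]
    omega

theorem mem_iev_range_iff {n s : ℕ} (hn : Odd n) :
    s ∈ Iev pathAdj (Finset.range n) ↔ s < n ∧ Odd s := by
  have hn2 := Nat.odd_iff.1 hn
  constructor
  · rintro ⟨hs, I', I'', ⟨hp', ho'⟩, ⟨hp'', ho''⟩, hsp, he⟩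
    obtain ⟨a, b, hab, rfl⟩ := exists_eq_Icc_of_isPathOn hp'
    obtain ⟨a', b', hab', rfl⟩ := exists_eq_Icc_of_isPathOn hp''
    have hsep := Icc_sep_of_spade hsp
    rw [Nat.card_Icc, Nat.odd_iff] at ho' ho''
    have hmem : ∀ k, (k < n ∧ k ≠ s) ↔ (a ≤ k ∧ k ≤ b ∨ a' ≤ k ∧ k ≤ b') := fun k => by
      simpa [and_comm] using Finset.ext_iff.1 he k
    -- the gap between the two intervals is `{s}`, so one of them is `[0, s - 1]`, of size `s`
    have := hmem 0
    have := hmem b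
    have := hmem b'
    have := hmem (b + 1)
    have := hmem (b' + 1)
    exact ⟨Finset.mem_range.1 hs, Nat.odd_iff.2 (by omega)⟩
  · rintro ⟨hs, hodd⟩
    have hs2 := Nat.odd_iff.1 hodd
    refine ⟨Finset.mem_range.2 hs, Finset.Icc 0 (s - 1), Finset.Icc (s + 1) (n - 1),
      ⟨isPathOn_Icc (Nat.zero_le _), ?_⟩, ⟨isPathOn_Icc (by omega), ?_⟩, ⟨?_, ?_⟩, ?_⟩
    · rw [Nat.card_Icc, Nat.odd_iff]; omega
    · rw [Nat.card_Icc, Nat.odd_iff]; omega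
    · ext k
      simp only [Finset.mem_inter, Finset.mem_Icc, Finset.notMem_empty, iff_false]
      omega
    · rw [connOn_iff_ordConnected, Finset.coe_union, Finset.coe_Icc, Finset.coe_Icc]
      intro h
      have := h.out (x := s - 1) (y := s + 1) (Or.inl ⟨by omega, le_rfl⟩)
        (Or.inr ⟨le_rfl, by omega⟩) (show s ∈ Set.Icc (s - 1) (s + 1) from ⟨by omega, by omega⟩)
      rcases this with ⟨-, h⟩ | ⟨h, -⟩ <;> omega
    · ext k
      simp only [Finset.mem_erase, Finset.mem_range, Finset.mem_union, Finset.mem_Icc]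
      omega

theorem sum_indicator_of_p0 {n s : ℕ} {𝒦 : Finset (Finset ℕ)}
    (hpath : ∀ K ∈ 𝒦, IsPathOn pathAdj K) (hsub : ∀ K ∈ 𝒦, K ⊆ Finset.range n)
    (hP0 : P0 pathAdj 𝒦) (hcard : 2 * 𝒦.card = n + 1) (hs : s ≤ n) :
    ∑ K ∈ 𝒦, (if s ∈ K then 1 else 0 : ZMod 2) = s + 1 := by
  choose! a b hab hKab using fun K hK => exists_eq_Icc_of_isPathOn (hpath K hK)
  have hmem : ∀ K ∈ 𝒦, s ∈ K ↔ a K ≤ s ∧ s ≤ b K := fun K hK => by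
    conv_lhs => rw [hKab K hK, Finset.mem_Icc]
  rw [Finset.sum_congr rfl fun K hK => by rw [if_congr (hmem K hK) rfl rfl]]
  refine IntervalsLaminar.sum_indicator_eq hab (fun K hK => ?_) (fun K hK K' hK' hne => ?_)
    hcard hs
  · have := hsub K hK ((hKab K hK).symm ▸ Finset.right_mem_Icc.2 (hab K hK))
    exact Finset.mem_range.1 this
  · have hKK' := hP0 K hK K' hK'
    rw [hKab K hK, hKab K' hK'] at hKK'
    rcases hKK' with h | h | h | h
    · exact absurd (by rw [hKab K hK, hKab K' hK', h]) hne
    · have := Icc_sep_of_spade h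
      omega
    · have := Icc_nested_of_prec (hab K hK) h
      omega
    · have := Icc_nested_of_prec (hab K' hK') h
      omega

end pathAdj

namespace cadj

theorem sub_right_iff {N : ℕ} (c x y : ZMod N) : cadj N (x - c) (y - c) ↔ cadj N x y := by
  simp only [cadj, sub_add_eq_add_sub, sub_left_inj]

theorem natCast_iff {N p q : ℕ} (hp : p + 1 < N) (hq : q + 1 < N) :
    cadj N (p : ZMod N) (q : ZMod N) ↔ pathAdj p q := by
  simp only [cadj, pathAdj, ← Nat.cast_succ, ZMod.natCast_eq_natCast_iff',
    Nat.mod_eq_of_lt hp, Nat.mod_eq_of_lt hq, Nat.mod_eq_of_lt (Nat.lt_of_succ_lt hp),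
    Nat.mod_eq_of_lt (Nat.lt_of_succ_lt hq)]

theorem adjEmbedsOn_val_sub {N : ℕ} [NeZero N] (c : ZMod N) :
    AdjEmbedsOn (cadj N) pathAdj {x | (x - c).val + 1 < N} (fun x => (x - c).val) := by
  refine ⟨fun x y h => sub_left_injective (ZMod.val_injective N h), fun x hx y hy => ?_⟩
  have := natCast_iff hx hy
  rwa [ZMod.natCast_zmod_val, ZMod.natCast_zmod_val, sub_right_iff, Iff.comm] at this

end cadj

theorem image_val_sub_compl_edge {N : ℕ} [NeZero N] (hN : 3 ≤ N) (t : ZMod N) :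
    (Finset.univ \ {t, t + 1}).image (fun x => (x - (t + 2)).val) = Finset.range (N - 2) := by
  ext k
  simp only [Finset.mem_image, Finset.mem_sdiff, Finset.mem_univ, Finset.mem_insert,
    Finset.mem_singleton, true_and, Finset.mem_range, not_or]
  constructor
  · rintro ⟨x, ⟨hxt, hxt1⟩, rfl⟩
    set v := (x - (t + 2)).val
    have hx : x = t + 2 + (v : ZMod N) := by
      rw [ZMod.natCast_zmod_val]; ring
    have hlt : v < N := ZMod.val_lt _
    by_contra hge
    rcases (by omega : v + 2 = N ∨ v + 1 = N) with h | h
    · have hN0 : ((v + 2 : ℕ) : ZMod N) = 0 := by rw [h, ZMod.natCast_self]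
      push_cast at hN0
      exact hxt (by linear_combination hx + hN0)
    · have hN0 : ((v + 1 : ℕ) : ZMod N) = 0 := by rw [h, ZMod.natCast_self]
      push_cast at hN0
      exact hxt1 (by linear_combination hx + hN0)
  · intro hk
    have hne : ∀ m : ℕ, 0 < m → m < N → (m : ZMod N) ≠ 0 := fun m h0 hm h => by
      rw [ZMod.natCast_eq_zero_iff] at h
      exact absurd (Nat.le_of_dvd h0 h) (by omega)
    refine ⟨t + 2 + k, ⟨fun h => hne (k + 2) (by omega) (by omega) ?_,
      fun h => hne (k + 1) (by omega) (by omega) ?_⟩, ?_⟩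
    · push_cast; linear_combination h
    · push_cast; linear_combination h
    · rw [add_sub_cancel_left, ZMod.val_natCast_of_lt (by omega)]

theorem eSum_eVec_apply {N : ℕ} (I : Finset (ZMod N)) (x : ZMod N) :
    eSum (eVec N) I x = if x ∈ I then 1 else 0 := by
  simp [eSum, eVec, Finset.sum_apply, Pi.single_apply]

theorem map_sum_eSum_mem_LB {S V W : Type} [AddCommGroup V] [Module (ZMod 2) V]
    [AddCommGroup W] [Module (ZMod 2) W] (g : V →ₗ[ZMod 2] W) (e : S → V)
    (B : Finset (Finset S)) : g (∑ I ∈ B, eSum e I) ∈ LB (g ∘ e) B := by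
  rw [map_sum]
  exact Submodule.sum_mem _ fun I hI =>
    Submodule.subset_span ⟨I, hI, by simp only [eSum, map_sum, Function.comp_apply]⟩

theorem val_sub_lt_of_mem_compl_edge {N : ℕ} [NeZero N] (hN : 3 ≤ N) {t x : ZMod N}
    (hx : x ∈ Finset.univ \ {t, t + 1}) : (x - (t + 2)).val < N - 2 :=
  Finset.mem_range.1 (image_val_sub_compl_edge hN t ▸ Finset.mem_image_of_mem _ hx)

theorem coe_compl_edge_subset {N : ℕ} [NeZero N] (hN : 3 ≤ N) (t : ZMod N) :
    ↑(Finset.univ \ {t, t + 1}) ⊆ {x : ZMod N | (x - (t + 2)).val + 1 < N} := fun x hx => by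
  have := val_sub_lt_of_mem_compl_edge hN hx
  show (x - (t + 2)).val + 1 < N
  omega

theorem sum_indicator_compl_edge {N : ℕ} [NeZero N] (hN : 3 ≤ N) {t : ZMod N}
    {B : Finset (Finset (ZMod N))} (hpath : ∀ I ∈ B, IsPathOn (cadj N) I) (hP0 : P0 (cadj N) B)
    (hBJ : ∀ I ∈ B, I ⊆ Finset.univ \ {t, t + 1}) (hcard : 2 * B.card = N - 1) {x : ZMod N}
    (hx : x ∈ Finset.univ \ {t, t + 1}) :
    ∑ I ∈ B, (if x ∈ I then 1 else 0 : ZMod 2) = (x - (t + 2)).val + 1 := by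
  set pos : ZMod N → ℕ := fun x => (x - (t + 2)).val
  have hemb := cadj.adjEmbedsOn_val_sub (t + 2)
  have hBD : ∀ I ∈ B, ↑I ⊆ {x | pos x + 1 < N} := fun I hI =>
    (Finset.coe_subset.2 (hBJ I hI)).trans (coe_compl_edge_subset hN t)
  have himage : ∑ I ∈ B, (if x ∈ I then 1 else 0 : ZMod 2) =
      ∑ K ∈ B.image (Finset.image pos), if pos x ∈ K then 1 else 0 := by
    rw [Finset.sum_image (Finset.image_injective hemb.1).injOn]
    exact Finset.sum_congr rfl fun I _ => if_congr hemb.1.mem_finset_image.symm rfl rfl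
  rw [himage]
  refine pathAdj.sum_indicator_of_p0 (n := N - 2) ?_ ?_ ((p0_image_iff hemb hBD).2 hP0) ?_
    (val_sub_lt_of_mem_compl_edge hN hx).le
  · simp only [Finset.forall_mem_image]
    exact fun I hI => (isPathOn_image_iff hemb (hBD I hI)).2 (hpath I hI)
  · simp only [Finset.forall_mem_image]
    exact fun I hI => image_val_sub_compl_edge hN t ▸ Finset.image_subset_image (hBJ I hI)
  · rw [Finset.card_image_of_injective _ (Finset.image_injective hemb.1)]
    omega

theorem mem_iev_compl_edge_iff {N : ℕ} [NeZero N] (hN : 3 ≤ N) (hodd : Odd N) {t x : ZMod N}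
    (hx : x ∈ Finset.univ \ {t, t + 1}) :
    x ∈ Iev (cadj N) (Finset.univ \ {t, t + 1}) ↔ Odd (x - (t + 2)).val := by
  rw [← mem_iev_image_iff (cadj.adjEmbedsOn_val_sub (t + 2)) (coe_compl_edge_subset hN t),
    image_val_sub_compl_edge hN t,
    pathAdj.mem_iev_range_iff (Nat.Odd.sub_even (by omega) hodd even_two)]
  exact and_iff_right (val_sub_lt_of_mem_compl_edge hN hx)

theorem ite_not_odd_eq_natCast_add_one (k : ℕ) :
    (if ¬ Odd k then 1 else 0 : ZMod 2) = k + 1 := by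
  by_cases hk : Odd k
  · rw [if_neg (not_not.2 hk), ZMod.natCast_eq_one_iff_odd.2 hk]; rfl
  · rw [if_pos hk, ZMod.natCast_eq_zero_iff_even.2 (Nat.not_odd_iff_even.1 hk), zero_add]

theorem piQ_eSum_ioddF_compl_edge_mem_LB {N : ℕ} [NeZero N] (hN : 3 ≤ N) (hodd : Odd N)
    (t : ZMod N) {B : Finset (Finset (ZMod N))} (hB : B ∈ phiSet (cadj N))
    (h1 : suppB B ∩ {t, t + 1} = ∅) (h2 : B.card = (N - 1) / 2) :
    piQ N (eSum (eVec N) (IoddF (cadj N) (Finset.univ \ {t, t + 1}))) ∈ LB (ebar N) B := by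
  set J : Finset (ZMod N) := Finset.univ \ {t, t + 1}
  have hBJ : ∀ I ∈ B, I ⊆ J := fun I hI x hx => Finset.mem_sdiff.2 ⟨Finset.mem_univ x,
    fun hxt => Finset.notMem_empty x
      (h1 ▸ Finset.mem_inter.2 ⟨Finset.mem_biUnion.2 ⟨I, hI, hx⟩, hxt⟩)⟩
  have hcard : 2 * B.card = N - 1 := by
    have := Nat.odd_iff.1 hodd
    omega
  have hvec : eSum (eVec N) (IoddF (cadj N) J) = ∑ I ∈ B, eSum (eVec N) I := by
    funext x
    simp only [Finset.sum_apply, eSum_eVec_apply]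
    by_cases hx : x ∈ J
    · rw [sum_indicator_compl_edge hN (fun I hI => (hB.1 I hI).1) hB.2.1 hBJ hcard hx,
        ← ite_not_odd_eq_natCast_add_one]
      exact if_congr (mem_ioddF.trans ((and_iff_right hx).trans
        (not_congr (mem_iev_compl_edge_iff hN hodd hx)))) rfl rfl
    · rw [if_neg fun h => hx (mem_ioddF.1 h).1,
        Finset.sum_eq_zero fun I hI => if_neg fun h => hx (hBJ I hI h)]
  rw [hvec]
  exact map_sum_eSum_mem_LB (piQ N) (eVec N) B

/-- if `supp(B) ∩ ee = ∅` and `|B| = (N-1)/2` then `[ee] ∈ L_B`. -/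
theorem statement14 (N : ℕ) [NeZero N] (hN : 3 ≤ N) (hodd : Odd N)
    (t t' : ZMod N) (hadj : cadj N t t')
    (B : Finset (Finset (ZMod N))) (hB : B ∈ phiSet (cadj N))
    (h1 : suppB B ∩ ({t, t'} : Finset (ZMod N)) = ∅) (h2 : B.card = (N - 1) / 2) :
    piQ N (eSum (eVec N)
      (IoddF (cadj N) (Finset.univ \ ({t, t'} : Finset (ZMod N))))) ∈ LB (ebar N) B := by
  obtain ⟨u, hu⟩ : ∃ u, ({t, t'} : Finset (ZMod N)) = {u, u + 1} := by
    rcases hadj with rfl | rfl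
    exacts [⟨t, rfl⟩, ⟨t', Finset.pair_comm _ _⟩]
  rw [hu] at h1 ⊢
  exact piQ_eSum_ioddF_compl_edge_mem_LB hN hodd u hB h1 h2
end

section
/- Let N ≥ 3 be odd, (S,E) the cycle of length N, and Vbar = V/(F·e_S). For every B in phi(Vbar), eps(B) = v_1(B) + v_3(B) + v_5(B) + … (a finite sum over odd layer indices k). -/
/-!
The members of `B` containing a fixed `s` form a chain, of length `g_s(B)`, and peeling off
maximal layers removes exactly the top of this chain at each step. Hence `s` lies in exactly one
member of each of the layers `B_1, …, B_{g_s(B)}` and in none of the later ones, so the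
coefficient of `ebar_s` in `v_1 + v_3 + …` is the number of odd `k ≤ g_s(B)`. Modulo 2 this is
`∑_{i ≤ g_s(B)} i = g_s(B)(g_s(B)+1)/2`.
-/

open Finset

section Layers

variable {S : Type} [DecidableEq S]

lemma restB_subset (B : Finset (Finset S)) : ∀ k, restB B k ⊆ B
  | 0 => Subset.refl B
  | k + 1 => sdiff_subset.trans (restB_subset B k)

lemma maxElts_subset_s15 (C : Finset (Finset S)) : maxElts C ⊆ C := filter_subset _ _

lemma gs_le_card (B : Finset (Finset S)) (s : S) : gs B s ≤ #B := card_filter_le _ _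

lemma filter_maxElts {p : Finset S → Prop} [DecidablePred p]
    (hp : ∀ I J, I ⊆ J → p I → p J) (C : Finset (Finset S)) :
    (maxElts C).filter p = maxElts (C.filter p) := by
  ext I
  simp only [maxElts, mem_filter]
  constructor
  · rintro ⟨⟨hI, hmax⟩, hpI⟩
    exact ⟨⟨hI, hpI⟩, fun J hJ => hmax J hJ.1⟩
  · rintro ⟨⟨hI, hpI⟩, hmax⟩
    exact ⟨⟨hI, fun J hJ hIJ => hmax J ⟨hJ, hp I J hIJ.subset hpI⟩ hIJ⟩, hpI⟩

lemma filter_restB {p : Finset S → Prop} [DecidablePred p]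
    (hp : ∀ I J, I ⊆ J → p I → p J) (B : Finset (Finset S)) :
    ∀ k, (restB B k).filter p = restB (B.filter p) k
  | 0 => rfl
  | k + 1 => by
    have hsdiff : ∀ C D : Finset (Finset S), (C \ D).filter p = C.filter p \ D.filter p := by
      intro C D; ext; simp only [mem_filter, mem_sdiff]; tauto
    rw [restB, restB, hsdiff, filter_maxElts hp, filter_restB hp B k]

lemma card_maxElts_of_isChain {C : Finset (Finset S)}
    (hC : IsChain (· ⊆ ·) (C : Set (Finset S))) (hne : C.Nonempty) :
    #(maxElts C) = 1 := by
  obtain ⟨M, hM⟩ := exists_maximal hne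
  have hMmax : M ∈ maxElts C :=
    mem_filter.mpr ⟨hM.1, fun J hJ hMJ => hMJ.2 (hM.2 hJ hMJ.1)⟩
  refine le_antisymm (card_le_one.mpr fun I hI J hJ => ?_) (card_pos.mpr ⟨M, hMmax⟩)
  obtain ⟨hIC, hImax⟩ := mem_filter.mp hI
  obtain ⟨hJC, hJmax⟩ := mem_filter.mp hJ
  by_contra hIJ
  rcases hC hIC hJC hIJ with h | h
  · exact hImax J hJC (ssubset_of_subset_of_ne h hIJ)
  · exact hJmax I hIC (ssubset_of_subset_of_ne h (Ne.symm hIJ))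

lemma card_restB_of_isChain {C : Finset (Finset S)}
    (hC : IsChain (· ⊆ ·) (C : Set (Finset S))) : ∀ k, #(restB C k) = #C - k
  | 0 => rfl
  | k + 1 => by
    have hchain : IsChain (· ⊆ ·) (restB C k : Set (Finset S)) :=
      hC.mono (coe_subset.mpr (restB_subset C k))
    have hk := card_restB_of_isChain hC k
    rw [restB, card_sdiff_of_subset (maxElts_subset_s15 _)]
    rcases (restB C k).eq_empty_or_nonempty with hempty | hne
    · simp only [hempty, card_empty] at hk ⊢
      omega
    · rw [card_maxElts_of_isChain hchain hne]
      omega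

lemma card_maxElts_restB_of_isChain {C : Finset (Finset S)}
    (hC : IsChain (· ⊆ ·) (C : Set (Finset S))) (k : ℕ) :
    #(maxElts (restB C k)) = if k < #C then 1 else 0 := by
  have hcard := card_restB_of_isChain hC k
  split_ifs with hk
  · exact card_maxElts_of_isChain (hC.mono (coe_subset.mpr (restB_subset C k)))
      (card_pos.mp (by omega))
  · rw [card_eq_zero.mp (by omega : #(restB C k) = 0)]
    rfl

lemma card_filter_mem_maxElts_restB {B : Finset (Finset S)}
    (hB : ∀ s, IsChain (· ⊆ ·) (B.filter (s ∈ ·) : Set (Finset S))) (s : S) (k : ℕ) :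
    #((maxElts (restB B k)).filter (s ∈ ·)) = if k < gs B s then 1 else 0 := by
  have hup : ∀ I J : Finset S, I ⊆ J → s ∈ I → s ∈ J := fun _ _ h hs => h hs
  rw [filter_maxElts hup, filter_restB hup, card_maxElts_restB_of_isChain (hB s)]
  rfl

end Layers

lemma sum_eSum_eq_sum_card_smul {S V : Type} [Fintype S] [DecidableEq S] [AddCommGroup V]
    [Module (ZMod 2) V] (e : S → V) (C : Finset (Finset S)) :
    ∑ I ∈ C, eSum e I = ∑ s, #(C.filter (s ∈ ·)) • e s := by
  rw [show ∑ I ∈ C, eSum e I = ∑ s, ∑ I ∈ C.filter (s ∈ ·), e s from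
    sum_comm' fun I s => by simp [and_comm]]
  simp only [sum_const]

lemma natCast_card_filter_odd_range (g : ℕ) :
    (#((range (g + 1)).filter Odd) : ZMod 2) = ((g * (g + 1) / 2 : ℕ) : ZMod 2) := by
  have hparity : ∀ i : ℕ, (i : ZMod 2) = if Odd i then 1 else 0 := fun i => by
    split_ifs with h
    · exact ZMod.natCast_eq_one_iff_odd.mpr h
    · exact ZMod.natCast_eq_zero_iff_even.mpr (Nat.not_odd_iff_even.mp h)
  have htriangle : g * (g + 1) / 2 = ∑ i ∈ range (g + 1), i := by
    rw [sum_range_id, Nat.add_sub_cancel, mul_comm]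
  rw [← sum_boole, htriangle, Nat.cast_sum]
  exact sum_congr rfl fun i _ => (hparity i).symm

lemma sum_odd_indicator_pred_lt {g n : ℕ} (hg : g ≤ n) :
    ∑ k ∈ (range (n + 1)).filter Odd, (if k - 1 < g then 1 else 0 : ℕ)
      = #((range (g + 1)).filter Odd) := by
  rw [sum_boole, Nat.cast_id, filter_filter]
  congr 1
  ext k
  simp only [mem_filter, mem_range]
  constructor
  · rintro ⟨_, hodd, hk⟩
    exact ⟨by have := hodd.pos; omega, hodd⟩
  · rintro ⟨hk, hodd⟩
    exact ⟨by omega, hodd, by have := hodd.pos; omega⟩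

theorem epsB_eq_sum_odd_layers {S V : Type} [Fintype S] [DecidableEq S] [AddCommGroup V]
    [Module (ZMod 2) V] (e : S → V) {B : Finset (Finset S)}
    (hB : ∀ s, IsChain (· ⊆ ·) (B.filter (s ∈ ·) : Set (Finset S))) :
    epsB e B = ∑ k ∈ (range (#B + 1)).filter Odd, ∑ I ∈ maxElts (restB B (k - 1)), eSum e I := by
  simp only [sum_eSum_eq_sum_card_smul, card_filter_mem_maxElts_restB hB]
  rw [sum_comm, epsB]
  refine sum_congr rfl fun s _ => ?_
  rw [← sum_smul, ← Nat.cast_smul_eq_nsmul (ZMod 2),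
    sum_odd_indicator_pred_lt (gs_le_card B s), natCast_card_filter_odd_range]

lemma P0.isChain_filter_mem {S : Type} [DecidableEq S] {adj : S → S → Prop}
    {B : Finset (Finset S)} (hB : P0 adj B) (s : S) :
    IsChain (· ⊆ ·) (B.filter (s ∈ ·) : Set (Finset S)) := by
  intro I hI J hJ hIJ
  simp only [mem_coe, mem_filter] at hI hJ
  rcases hB I hI.1 J hJ.1 with h | h | h | h
  · exact absurd h hIJ
  · exact absurd (h.1 ▸ mem_inter.mpr ⟨hI.2, hJ.2⟩) (notMem_empty s)
  · exact Or.inl h.1.subset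
  · exact Or.inr h.1.subset

theorem statement15_general (N : ℕ) [NeZero N]
    (B : Finset (Finset (ZMod N))) (hB : B ∈ phiSet (cadj N)) :
    epsB (ebar N) B =
      ∑ k ∈ (Finset.range (B.card + 1)).filter (fun k => Odd k),
        ∑ I ∈ maxElts (restB B (k - 1)), eSum (ebar N) I :=
  epsB_eq_sum_odd_layers (ebar N) hB.2.1.isChain_filter_mem

/-- `eps(B) = v_1(B) + v_3(B) + v_5(B) + …`, the sum of the layer vectors
`v_k(B) = ∑_{I ∈ B_k} ebar_I` over odd layer indices `k`. -/
theorem statement15 (N : ℕ) [NeZero N] (hN : 3 ≤ N) (hodd : Odd N)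
    (B : Finset (Finset (ZMod N))) (hB : B ∈ phiSet (cadj N)) :
    epsB (ebar N) B =
      ∑ k ∈ (Finset.range (B.card + 1)).filter (fun k => Odd k),
        ∑ I ∈ maxElts (restB B (k - 1)), eSum (ebar N) I :=
  statement15_general N B hB
end
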